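/- arXiv:2412.00234 — 5 statements merged into one kernel-verified Lean document; each statement's English description precedes it below -/
import Mathlib

section
/- Let G be a finite group, X a conjugacy class of G with x ▷ y = xyx⁻¹, and let q, q' : X × X → kˣ be rack 2-cocycles that are twist-equivalent via a normalized group 2-cocycle σ on G: q'(x,y) = σ(x,y) q(x,y) σ(x ▷ y, x)⁻¹ for all x, y ∈ X. For n ≥ 2, let ρ_n and ρ'_n be the representations of generators σ_1, …, σ_{n−1} on (kX)^{⊗n} where σ_j acts by c_q (resp. c_{q'}) on the j-th and (j+1)-th tensor factors and identity elsewhere, with c_q(x ⊗ y) = q(x,y) (x ▷ y) ⊗ x. Define the linear isomorphism f of (kX)^{⊗n} by f(x_1 ⊗ ⋯ ⊗ x_n) = (∏_{i=1}^{n−1} σ(x_i, x_{i+1} ⋯ x_n)) x_1 ⊗ ⋯ ⊗ x_n, where products x_{i+1} ⋯ x_n are taken in G. Then ρ_n(σ_j) ∘ f = f ∘ ρ'_n(σ_j) for every j = 1, …, n−1. -/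
open Finsupp

private lemma finRange_decomp (m : ℕ) (j : Fin m) :
    ∃ A B : List (Fin (m+1)),
      List.finRange (m+1) = A ++ j.castSucc :: j.succ :: B ∧
      (∀ l ∈ A, (l : ℕ) < (j : ℕ)) ∧ (∀ l ∈ B, (j : ℕ) + 1 < (l : ℕ)) := by
  have hlen : (List.finRange (m+1)).length = m + 1 := List.length_finRange
  have hj : (j : ℕ) < m := j.isLt
  refine ⟨(List.finRange (m+1)).take (j : ℕ), (List.finRange (m+1)).drop ((j : ℕ)+2),
    ?_, ?_, ?_⟩
  · conv_lhs => rw [← List.take_append_drop (j : ℕ) (List.finRange (m+1))]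
    congr 1
    rw [List.drop_eq_getElem_cons (by omega : (j : ℕ) < (List.finRange (m+1)).length),
      List.drop_eq_getElem_cons (by omega : (j : ℕ) + 1 < (List.finRange (m+1)).length)]
    simp [Fin.ext_iff]
  · intro l hl
    rw [List.mem_take_iff_getElem] at hl
    obtain ⟨i, hi, rfl⟩ := hl
    simp only [List.getElem_finRange]
    simp only [hlen] at hi
    simpa using (by omega : i < (j : ℕ))
  · intro l hl
    rw [List.mem_drop_iff_getElem] at hl
    obtain ⟨i, hi, rfl⟩ := hl
    simp only [List.getElem_finRange]
    simp only [hlen] at hi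
    simpa using (by omega : (j : ℕ) + 1 < (j : ℕ) + 2 + i)

private lemma key_units {k : Type*} [Field k]
    {G : Type*} [Group G] {X : Set G}
    (op : X → X → X)
    (hop : ∀ x y : X, (op x y : G) = (x : G) * y * (x : G)⁻¹)
    (q q' : X → X → kˣ) (σ : G → G → kˣ)
    (hσ : ∀ a b c : G, σ a b * σ (a * b) c = σ b c * σ a (b * c))
    (htwist : ∀ x y : X, q' x y = σ (x : G) (y : G) * q x y * (σ ((op x y : G)) (x : G))⁻¹)
    (m : ℕ) (j : Fin m) (x : Fin (m + 1) → X) :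
    (∏ i : Fin (m + 1),
        σ (x i : G)
          (((List.finRange (m + 1)).map
              (fun l => if i < l then (x l : G) else 1)).prod)) *
      q (x j.castSucc) (x j.succ)
    = q' (x j.castSucc) (x j.succ) *
      ∏ i : Fin (m + 1),
        σ ((Function.update (Function.update x j.succ (x j.castSucc)) j.castSucc
              (op (x j.castSucc) (x j.succ))) i : G)
          (((List.finRange (m + 1)).map
              (fun l => if i < l then
                ((Function.update (Function.update x j.succ (x j.castSucc)) j.castSucc
                  (op (x j.castSucc) (x j.succ))) l : G) else 1)).prod) := by
  set a := x j.castSucc with ha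
  set b := x j.succ with hb
  set x' := Function.update (Function.update x j.succ a) j.castSucc (op a b) with hx'
  have hvjc : (j.castSucc : ℕ) = (j : ℕ) := rfl
  have hvjs : (j.succ : ℕ) = (j : ℕ) + 1 := rfl
  have hne : j.castSucc ≠ j.succ := by
    simp [Fin.ext_iff, hvjc, hvjs]
  have hx'jc : x' j.castSucc = op a b := Function.update_self _ _ _
  have hx'js : x' j.succ = a := by
    rw [hx', Function.update_of_ne hne.symm, Function.update_self]
  have hx'other : ∀ i, i ≠ j.castSucc → i ≠ j.succ → x' i = x i := by
    intro i h1 h2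
    rw [hx', Function.update_of_ne h1, Function.update_of_ne h2]
  obtain ⟨A, B, hAB, hA, hB⟩ := finRange_decomp m j
  have hAne : ∀ l ∈ A, l ≠ j.castSucc ∧ l ≠ j.succ := by
    intro l hl
    have := hA l hl
    constructor <;> (intro hc; rw [hc] at this; omega)
  have hBne : ∀ l ∈ B, l ≠ j.castSucc ∧ l ≠ j.succ := by
    intro l hl
    have := hB l hl
    constructor <;> (intro hc; rw [hc] at this; omega)
  -- decomposition of the inner products
  have Pval : ∀ (y : Fin (m+1) → X) (i : Fin (m+1)),
      ((List.finRange (m + 1)).map (fun l => if i < l then (y l : G) else 1)).prod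
      = (A.map (fun l => if i < l then (y l : G) else 1)).prod *
        ((if i < j.castSucc then (y j.castSucc : G) else 1) *
          ((if i < j.succ then (y j.succ : G) else 1) *
            (B.map (fun l => if i < l then (y l : G) else 1)).prod)) := by
    intro y i
    rw [hAB, List.map_append, List.prod_append, List.map_cons, List.prod_cons,
      List.map_cons, List.prod_cons]
  set R := (B.map (fun l => (x l : G))).prod with hR
  -- A-part is trivial when i = jc or js
  have hApart : ∀ (y : Fin (m+1) → X) (i : Fin (m+1)), (j : ℕ) ≤ (i : ℕ) →
      (A.map (fun l => if i < l then (y l : G) else 1)).prod = 1 := by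
    intro y i hi
    apply List.prod_eq_one
    intro z hz
    rw [List.mem_map] at hz
    obtain ⟨l, hl, rfl⟩ := hz
    have := hA l hl
    rw [if_neg]
    rw [Fin.lt_def]; omega
  have hBpartx : ∀ i : Fin (m+1), (i : ℕ) ≤ (j : ℕ) + 1 →
      (B.map (fun l => if i < l then (x l : G) else 1)).prod = R := by
    intro i hi
    rw [hR]
    congr 1
    apply List.map_congr_left
    intro l hl
    have := hB l hl
    rw [if_pos]
    rw [Fin.lt_def]; omega
  have hBpartx' : ∀ i : Fin (m+1),
      (B.map (fun l => if i < l then (x' l : G) else 1)).prod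
      = (B.map (fun l => if i < l then (x l : G) else 1)).prod := by
    intro i
    congr 1
    apply List.map_congr_left
    intro l hl
    obtain ⟨h1, h2⟩ := hBne l hl
    rw [hx'other l h1 h2]
  have hjcjs : j.castSucc < j.succ := by rw [Fin.lt_def]; omega
  have hPjcx : ((List.finRange (m + 1)).map
      (fun l => if j.castSucc < l then (x l : G) else 1)).prod = (b : G) * R := by
    rw [Pval x j.castSucc, hApart x j.castSucc (by omega), if_neg (lt_irrefl _),
      if_pos hjcjs, hBpartx j.castSucc (by omega), one_mul, one_mul]
  have hPjsx : ((List.finRange (m + 1)).map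
      (fun l => if j.succ < l then (x l : G) else 1)).prod = R := by
    rw [Pval x j.succ, hApart x j.succ (by omega), if_neg (by rw [Fin.lt_def]; omega),
      if_neg (lt_irrefl _), hBpartx j.succ (by omega), one_mul, one_mul, one_mul]
  have hPjcx' : ((List.finRange (m + 1)).map
      (fun l => if j.castSucc < l then (x' l : G) else 1)).prod = (a : G) * R := by
    rw [Pval x' j.castSucc, hApart x' j.castSucc (by omega), if_neg (lt_irrefl _),
      if_pos hjcjs, hBpartx' j.castSucc, hBpartx j.castSucc (by omega), hx'js,
      one_mul, one_mul]
  have hPjsx' : ((List.finRange (m + 1)).map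
      (fun l => if j.succ < l then (x' l : G) else 1)).prod = R := by
    rw [Pval x' j.succ, hApart x' j.succ (by omega), if_neg (by rw [Fin.lt_def]; omega),
      if_neg (lt_irrefl _), hBpartx' j.succ, hBpartx j.succ (by omega),
      one_mul, one_mul, one_mul]
  have hPeq : ∀ i : Fin (m+1), i ≠ j.castSucc → i ≠ j.succ →
      ((List.finRange (m + 1)).map (fun l => if i < l then (x' l : G) else 1)).prod
      = ((List.finRange (m + 1)).map (fun l => if i < l then (x l : G) else 1)).prod := by
    intro i h1 h2
    have h1' : (i : ℕ) ≠ (j : ℕ) := fun hc => h1 (Fin.ext hc)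
    have h2' : (i : ℕ) ≠ (j : ℕ) + 1 := fun hc => h2 (Fin.ext hc)
    rw [Pval x' i, Pval x i, hBpartx' i]
    have hApartEq : (A.map (fun l => if i < l then (x' l : G) else 1)).prod
        = (A.map (fun l => if i < l then (x l : G) else 1)).prod := by
      congr 1
      apply List.map_congr_left
      intro l hl
      obtain ⟨e1, e2⟩ := hAne l hl
      rw [hx'other l e1 e2]
    rw [hApartEq]
    by_cases hij : i < j.castSucc
    · have hij2 : i < j.succ := lt_trans hij hjcjs
      rw [if_pos hij, if_pos hij2, hx'jc, hx'js, hop]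
      congr 1
      rw [if_pos hij, if_pos hij2, ← ha, ← hb, ← mul_assoc, ← mul_assoc,
        inv_mul_cancel_right]
    · have hij2 : ¬ i < j.succ := by
        rw [Fin.lt_def] at hij ⊢; omega
      rw [if_neg hij, if_neg hij2, if_neg hij, if_neg hij2]
  -- split off the two special factors of each big product
  have hne' : j.succ ≠ j.castSucc := hne.symm
  have hsplit : ∀ F : Fin (m+1) → kˣ,
      ∏ i, F i = F j.castSucc * (F j.succ *
        ∏ i ∈ (Finset.univ.erase j.castSucc).erase j.succ, F i) := by
    intro F
    rw [← Finset.mul_prod_erase Finset.univ F (Finset.mem_univ j.castSucc),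
      ← Finset.mul_prod_erase _ F
        (Finset.mem_erase.mpr ⟨hne', Finset.mem_univ j.succ⟩)]
  rw [hsplit, hsplit]
  have hZ : (∏ i ∈ (Finset.univ.erase j.castSucc).erase j.succ,
        σ (x' i : G) (((List.finRange (m + 1)).map
          (fun l => if i < l then (x' l : G) else 1)).prod))
      = ∏ i ∈ (Finset.univ.erase j.castSucc).erase j.succ,
        σ (x i : G) (((List.finRange (m + 1)).map
          (fun l => if i < l then (x l : G) else 1)).prod) := by
    apply Finset.prod_congr rfl
    intro i hi
    rw [Finset.mem_erase] at hi
    obtain ⟨hi1, hi2⟩ := hi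
    rw [Finset.mem_erase] at hi2
    rw [hx'other i hi2.1 hi1, hPeq i hi2.1 hi1]
  rw [hZ, hx'jc, hx'js, hPjcx, hPjsx, hPjcx', hPjsx', htwist, hop]
  set Z := ∏ i ∈ (Finset.univ.erase j.castSucc).erase j.succ,
        σ (x i : G) (((List.finRange (m + 1)).map
          (fun l => if i < l then (x l : G) else 1)).prod) with hZdef
  set c : G := (a : G) * (b : G) * (a : G)⁻¹ with hc
  have h2 : σ c (a : G) * σ ((a : G) * (b : G)) R = σ (a : G) R * σ c ((a : G) * R) := by
    have := hσ c (a : G) R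
    rwa [show c * (a : G) = (a : G) * (b : G) by rw [hc]; group] at this
  have main : σ (a : G) ((b : G) * R) * σ (b : G) R * σ c (a : G)
      = σ (a : G) (b : G) * (σ (a : G) R * σ c ((a : G) * R)) := by
    rw [mul_comm (σ (a : G) ((b : G) * R)) (σ (b : G) R), ← hσ (a : G) (b : G) R,
      mul_assoc, mul_comm (σ ((a : G) * (b : G)) R) (σ c (a : G)), h2]
  rw [← mul_left_inj (σ c (a : G))]
  calc σ (a : G) ((b : G) * R) * (σ (b : G) R * Z) * q a b * σ c (a : G)
      = (σ (a : G) ((b : G) * R) * σ (b : G) R * σ c (a : G)) * (Z * q a b) := by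
        ac_rfl
    _ = (σ (a : G) (b : G) * (σ (a : G) R * σ c ((a : G) * R))) * (Z * q a b) := by
        rw [main]
    _ = ((σ c (a : G))⁻¹ * σ c (a : G)) *
        ((σ (a : G) (b : G) * q a b) * (σ c ((a : G) * R) * (σ (a : G) R * Z))) := by
        rw [inv_mul_cancel, one_mul]; ac_rfl
    _ = σ (a : G) (b : G) * q a b * (σ c (a : G))⁻¹ *
        (σ c ((a : G) * R) * (σ (a : G) R * Z)) * σ c (a : G) := by
        ac_rfl


/-- Proposition A.1: if `q, q'` are twist-equivalent rack 2-cocycles on a conjugacy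
class `X` of a finite group `G` (via a normalized group 2-cocycle `σ`), then the
explicit rescaling `f` of `(kX)^{⊗ n}` (modelled as the free vector space on
`Fin n → X`, `n = m + 1`) intertwines the braid-generator actions `ρ_j` and
`ρ'_j` associated with `c_q` and `c_{q'}`. -/
theorem braid_representations_intertwined {k : Type*} [Field k]
    {G : Type*} [Group G] [Fintype G] (X : Set G)
    (hXconj : ∃ a : G, X = {b : G | IsConj a b})
    (op : X → X → X)
    (hop : ∀ x y : X, (op x y : G) = (x : G) * y * (x : G)⁻¹)
    (q q' : X → X → kˣ) (σ : G → G → kˣ)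
    (hσ : ∀ a b c : G, σ a b * σ (a * b) c = σ b c * σ a (b * c))
    (hσ1 : ∀ a : G, σ a 1 = 1 ∧ σ 1 a = 1)
    (htwist : ∀ x y : X, q' x y = σ (x : G) (y : G) * q x y * (σ ((op x y : G)) (x : G))⁻¹)
    (m : ℕ)
    (ρ ρ' : Fin m → (((Fin (m + 1) → X) →₀ k) →ₗ[k] ((Fin (m + 1) → X) →₀ k)))
    (hρ : ∀ (j : Fin m) (x : Fin (m + 1) → X),
      ρ j (Finsupp.single x 1) =
        ((q (x j.castSucc) (x j.succ) : kˣ) : k) •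
          Finsupp.single
            (Function.update (Function.update x j.succ (x j.castSucc)) j.castSucc
              (op (x j.castSucc) (x j.succ))) 1)
    (hρ' : ∀ (j : Fin m) (x : Fin (m + 1) → X),
      ρ' j (Finsupp.single x 1) =
        ((q' (x j.castSucc) (x j.succ) : kˣ) : k) •
          Finsupp.single
            (Function.update (Function.update x j.succ (x j.castSucc)) j.castSucc
              (op (x j.castSucc) (x j.succ))) 1)
    (f : ((Fin (m + 1) → X) →₀ k) →ₗ[k] ((Fin (m + 1) → X) →₀ k))
    (hf : ∀ x : Fin (m + 1) → X,
      f (Finsupp.single x 1) =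
        ((∏ i : Fin (m + 1),
            σ (x i : G)
              (((List.finRange (m + 1)).map
                  (fun l => if i < l then (x l : G) else 1)).prod) : kˣ) : k) •
          Finsupp.single x 1) :
    ∀ j : Fin m, (ρ j) ∘ₗ f = f ∘ₗ (ρ' j) := by
  intro j
  apply Finsupp.lhom_ext
  intro x b
  have hsingle : (Finsupp.single x b : (Fin (m + 1) → X) →₀ k) = b • Finsupp.single x 1 := by
    rw [Finsupp.smul_single, smul_eq_mul, mul_one]
  rw [LinearMap.comp_apply, LinearMap.comp_apply, hsingle, map_smul, map_smul, map_smul,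
    map_smul]
  congr 1
  rw [hf x, hρ' j x, map_smul, map_smul, hρ j x,
    hf (Function.update (Function.update x j.succ (x j.castSucc)) j.castSucc
      (op (x j.castSucc) (x j.succ))), smul_smul, smul_smul]
  congr 1
  rw [← Units.val_mul, ← Units.val_mul]
  exact congrArg Units.val (key_units op hop q q' σ hσ htwist m j x)
end

section
/- Let C be a coalgebra over a field k and T(C) the tensor algebra on the underlying vector space of C, with comultiplication Δ_{T(C)} and counit ε_{T(C)} defined as the unique algebra morphisms T(C) → T(C) ⊗ T(C) and T(C) → k extending (ι ⊗ ι) ∘ Δ_C and ε_C, where ι : C → T(C) is the canonical inclusion. Then T(C) is a bialgebra, and for any bialgebra A and any coalgebra morphism f : C → A, there is a unique bialgebra morphism f̃ : T(C) → A with f̃ ∘ ι = f. -/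
open TensorProduct Coalgebra

section RadfordAux

variable {k : Type*} [Field k] {C : Type*}
    [AddCommGroup C] [Module k C] [Coalgebra k C]

local notation "T" => TensorAlgebra k C

noncomputable def radfordComul : T →ₐ[k] T ⊗[k] T :=
  TensorAlgebra.lift k
    ((TensorProduct.map (TensorAlgebra.ι k) (TensorAlgebra.ι k)) ∘ₗ comul)

lemma radfordComul_ι (c : C) :
    radfordComul (k := k) (TensorAlgebra.ι k c)
      = TensorProduct.map (TensorAlgebra.ι k) (TensorAlgebra.ι k) (comul (R := k) c) := by
  simp [radfordComul]

lemma radford_coassoc_key (c : C) :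
    (Algebra.TensorProduct.assoc k k k T T T)
        ((Algebra.TensorProduct.map (radfordComul (k:=k) (C:=C)) (AlgHom.id k T))
          (radfordComul (TensorAlgebra.ι k c)))
      = (Algebra.TensorProduct.map (AlgHom.id k T) (radfordComul (k:=k) (C:=C)))
          (radfordComul (TensorAlgebra.ι k c)) := by
  rw [radfordComul_ι]
  set r := ℛ k c with hr
  set r1 : ∀ i, Coalgebra.Repr k (r.left i) (C × C) := fun i => ℛ k (r.left i) with hr1
  set r2 : ∀ i, Coalgebra.Repr k (r.right i) (C × C) := fun i => ℛ k (r.right i) with hr2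
  have key := congrArg (TensorProduct.map (TensorAlgebra.ι k)
      (TensorProduct.map (TensorAlgebra.ι k) (TensorAlgebra.ι k)))
    (Coalgebra.sum_tmul_tmul_eq r r1 r2)
  simp only [map_sum, TensorProduct.map_tmul] at key
  rw [← r.eq]
  simp only [map_sum, TensorProduct.map_tmul, Algebra.TensorProduct.map_tmul,
    AlgHom.coe_id, id_eq, radfordComul_ι]
  calc ∑ i ∈ r.index, (Algebra.TensorProduct.assoc k k k T T T)
        ((TensorProduct.map (TensorAlgebra.ι k) (TensorAlgebra.ι k) (comul (r.left i)))
          ⊗ₜ TensorAlgebra.ι k (r.right i))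
      = ∑ i ∈ r.index, ∑ j ∈ (r1 i).index,
          TensorAlgebra.ι k ((r1 i).left j) ⊗ₜ
            (TensorAlgebra.ι k ((r1 i).right j) ⊗ₜ TensorAlgebra.ι k (r.right i)) := by
        refine Finset.sum_congr rfl fun i _ => ?_
        rw [← (r1 i).eq]
        simp [TensorProduct.sum_tmul]
    _ = ∑ i ∈ r.index, ∑ j ∈ (r2 i).index,
          TensorAlgebra.ι k (r.left i) ⊗ₜ
            (TensorAlgebra.ι k ((r2 i).left j) ⊗ₜ TensorAlgebra.ι k ((r2 i).right j)) := key
    _ = ∑ i ∈ r.index, TensorAlgebra.ι k (r.left i) ⊗ₜ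
          TensorProduct.map (TensorAlgebra.ι k) (TensorAlgebra.ι k) (comul (r.right i)) := by
        refine Finset.sum_congr rfl fun i _ => ?_
        rw [← (r2 i).eq]
        simp [TensorProduct.tmul_sum]

lemma radford_coassoc :
    (TensorProduct.assoc k T T T).toLinearMap ∘ₗ
        LinearMap.rTensor T (radfordComul (k:=k) (C:=C)).toLinearMap ∘ₗ
          (radfordComul (k:=k) (C:=C)).toLinearMap =
      LinearMap.lTensor T (radfordComul (k:=k) (C:=C)).toLinearMap ∘ₗ
        (radfordComul (k:=k) (C:=C)).toLinearMap := by
  have key : ((Algebra.TensorProduct.assoc k k k T T T).toAlgHom.comp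
      ((Algebra.TensorProduct.map (radfordComul (k:=k) (C:=C)) (AlgHom.id k T)).comp
        radfordComul))
      = (Algebra.TensorProduct.map (AlgHom.id k T) (radfordComul (k:=k) (C:=C))).comp
          radfordComul := by
    apply TensorAlgebra.hom_ext
    ext c
    exact radford_coassoc_key c
  have e1 : (Algebra.TensorProduct.map (radfordComul (k:=k) (C:=C)) (AlgHom.id k T)).toLinearMap
      = LinearMap.rTensor T (radfordComul (k:=k) (C:=C)).toLinearMap :=
    TensorProduct.ext' fun x y => rfl
  have e2 : (Algebra.TensorProduct.map (AlgHom.id k T) (radfordComul (k:=k) (C:=C))).toLinearMap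
      = LinearMap.lTensor T (radfordComul (k:=k) (C:=C)).toLinearMap :=
    TensorProduct.ext' fun x y => rfl
  have e3 : (Algebra.TensorProduct.assoc k k k T T T).toAlgHom.toLinearMap
      = (TensorProduct.assoc k T T T).toLinearMap := rfl
  calc (TensorProduct.assoc k T T T).toLinearMap ∘ₗ
        LinearMap.rTensor T (radfordComul (k:=k) (C:=C)).toLinearMap ∘ₗ
          (radfordComul (k:=k) (C:=C)).toLinearMap
      = ((Algebra.TensorProduct.assoc k k k T T T).toAlgHom.comp
          ((Algebra.TensorProduct.map (radfordComul (k:=k) (C:=C)) (AlgHom.id k T)).comp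
            radfordComul)).toLinearMap := by
        rw [AlgHom.comp_toLinearMap, AlgHom.comp_toLinearMap, e1, e3]
    _ = ((Algebra.TensorProduct.map (AlgHom.id k T) (radfordComul (k:=k) (C:=C))).comp
          radfordComul).toLinearMap := by rw [key]
    _ = _ := by rw [AlgHom.comp_toLinearMap, e2]

noncomputable def radfordCounit : T →ₐ[k] k :=
  TensorAlgebra.lift k (counit (R := k) (A := C))

lemma radfordCounit_ι (c : C) :
    radfordCounit (k := k) (TensorAlgebra.ι k c) = counit (R := k) c := by
  simp [radfordCounit]

lemma radford_counit_left :
    (TensorProduct.lid k T).toLinearMap ∘ₗ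
        LinearMap.rTensor T (radfordCounit (k:=k) (C:=C)).toLinearMap ∘ₗ
          (radfordComul (k:=k) (C:=C)).toLinearMap = LinearMap.id := by
  have key : ((Algebra.TensorProduct.lid k T).toAlgHom.comp
      ((Algebra.TensorProduct.map (radfordCounit (k:=k) (C:=C)) (AlgHom.id k T)).comp
        radfordComul)) = AlgHom.id k T := by
    apply TensorAlgebra.hom_ext
    ext c
    set r := ℛ k c with hr
    have key3 := congrArg (TensorProduct.lid k C) (Coalgebra.sum_counit_tmul_eq (R := k) r)
    simp only [map_sum, TensorProduct.lid_tmul, one_smul] at key3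
    show (Algebra.TensorProduct.lid k T)
        ((Algebra.TensorProduct.map radfordCounit (AlgHom.id k T))
          (radfordComul ((TensorAlgebra.ι k) c))) = TensorAlgebra.ι k c
    rw [radfordComul_ι, ← r.eq]
    simp only [map_sum, TensorProduct.map_tmul, Algebra.TensorProduct.map_tmul,
      AlgHom.coe_id, id_eq, radfordCounit_ι, Algebra.TensorProduct.lid_tmul]
    simp_rw [← map_smul, ← map_sum, key3]
  have e1 : (Algebra.TensorProduct.map (radfordCounit (k:=k) (C:=C)) (AlgHom.id k T)).toLinearMap
      = LinearMap.rTensor T (radfordCounit (k:=k) (C:=C)).toLinearMap :=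
    TensorProduct.ext' fun x y => rfl
  have e3 : (Algebra.TensorProduct.lid k T).toAlgHom.toLinearMap
      = (TensorProduct.lid k T).toLinearMap := rfl
  calc (TensorProduct.lid k T).toLinearMap ∘ₗ
        LinearMap.rTensor T (radfordCounit (k:=k) (C:=C)).toLinearMap ∘ₗ
          (radfordComul (k:=k) (C:=C)).toLinearMap
      = ((Algebra.TensorProduct.lid k T).toAlgHom.comp
          ((Algebra.TensorProduct.map (radfordCounit (k:=k) (C:=C)) (AlgHom.id k T)).comp
            radfordComul)).toLinearMap := by
        rw [AlgHom.comp_toLinearMap, AlgHom.comp_toLinearMap, e1, e3]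
    _ = (AlgHom.id k T).toLinearMap := by rw [key]
    _ = LinearMap.id := rfl

lemma radford_counit_right :
    (TensorProduct.rid k T).toLinearMap ∘ₗ
        LinearMap.lTensor T (radfordCounit (k:=k) (C:=C)).toLinearMap ∘ₗ
          (radfordComul (k:=k) (C:=C)).toLinearMap = LinearMap.id := by
  have key : ((Algebra.TensorProduct.rid k k T).toAlgHom.comp
      ((Algebra.TensorProduct.map (AlgHom.id k T) (radfordCounit (k:=k) (C:=C))).comp
        radfordComul)) = AlgHom.id k T := by
    apply TensorAlgebra.hom_ext
    ext c
    set r := ℛ k c with hr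
    have key3 := congrArg (TensorProduct.rid k C) (Coalgebra.sum_tmul_counit_eq (R := k) r)
    simp only [map_sum, TensorProduct.rid_tmul, one_smul] at key3
    show (Algebra.TensorProduct.rid k k T)
        ((Algebra.TensorProduct.map (AlgHom.id k T) radfordCounit)
          (radfordComul ((TensorAlgebra.ι k) c))) = TensorAlgebra.ι k c
    rw [radfordComul_ι, ← r.eq]
    simp only [map_sum, TensorProduct.map_tmul, Algebra.TensorProduct.map_tmul,
      AlgHom.coe_id, id_eq, radfordCounit_ι, Algebra.TensorProduct.rid_tmul]
    simp_rw [← map_smul, ← map_sum, key3]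
  have e1 : (Algebra.TensorProduct.map (AlgHom.id k T) (radfordCounit (k:=k) (C:=C))).toLinearMap
      = LinearMap.lTensor T (radfordCounit (k:=k) (C:=C)).toLinearMap :=
    TensorProduct.ext' fun x y => rfl
  have e3 : (Algebra.TensorProduct.rid k k T).toAlgHom.toLinearMap
      = (TensorProduct.rid k T).toLinearMap := TensorProduct.ext' fun x y => rfl
  calc (TensorProduct.rid k T).toLinearMap ∘ₗ
        LinearMap.lTensor T (radfordCounit (k:=k) (C:=C)).toLinearMap ∘ₗ
          (radfordComul (k:=k) (C:=C)).toLinearMap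
      = ((Algebra.TensorProduct.rid k k T).toAlgHom.comp
          ((Algebra.TensorProduct.map (AlgHom.id k T) (radfordCounit (k:=k) (C:=C))).comp
            radfordComul)).toLinearMap := by
        rw [AlgHom.comp_toLinearMap, AlgHom.comp_toLinearMap, e1, e3]
    _ = (AlgHom.id k T).toLinearMap := by rw [key]
    _ = LinearMap.id := rfl

lemma radford_universal (A : Type*) [Ring A] [Bialgebra k A] (f : C →ₗ[k] A)
    (hf : comul (R := k) ∘ₗ f = TensorProduct.map f f ∘ₗ comul (R := k))
    (hε : counit (R := k) ∘ₗ f = counit (R := k)) :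
    ∃! g : T →ₐ[k] A,
      (comul (R := k) ∘ₗ g.toLinearMap =
        TensorProduct.map g.toLinearMap g.toLinearMap ∘ₗ
          (radfordComul (k:=k) (C:=C)).toLinearMap) ∧
      (counit (R := k) ∘ₗ g.toLinearMap = (radfordCounit (k:=k) (C:=C)).toLinearMap) ∧
      (∀ c : C, g (TensorAlgebra.ι k c) = f c) := by
  have e2 : ∀ g : T →ₐ[k] A, (Algebra.TensorProduct.map g g).toLinearMap
      = TensorProduct.map g.toLinearMap g.toLinearMap :=
    fun g => TensorProduct.ext' fun x y => rfl
  refine ⟨TensorAlgebra.lift k f, ⟨?_, ?_, fun c => by simp⟩, ?_⟩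
  · have key : (Bialgebra.comulAlgHom k A).comp (TensorAlgebra.lift k f)
        = (Algebra.TensorProduct.map (TensorAlgebra.lift k f) (TensorAlgebra.lift k f)).comp
            radfordComul := by
      apply TensorAlgebra.hom_ext
      ext c
      show comul ((TensorAlgebra.lift k f) (TensorAlgebra.ι k c))
        = (Algebra.TensorProduct.map (TensorAlgebra.lift k f) (TensorAlgebra.lift k f))
            (radfordComul (TensorAlgebra.ι k c))
      rw [TensorAlgebra.lift_ι_apply, radfordComul_ι]
      have hfc := LinearMap.congr_fun hf c
      simp only [LinearMap.coe_comp, Function.comp_apply] at hfc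
      rw [hfc]
      set r := ℛ k c with hr
      rw [← r.eq]
      simp [TensorAlgebra.lift_ι_apply]
    have := congrArg AlgHom.toLinearMap key
    rw [AlgHom.comp_toLinearMap, AlgHom.comp_toLinearMap, e2] at this
    exact this
  · have key : (Bialgebra.counitAlgHom k A).comp (TensorAlgebra.lift k f)
        = radfordCounit := by
      apply TensorAlgebra.hom_ext
      ext c
      show counit ((TensorAlgebra.lift k f) (TensorAlgebra.ι k c))
        = radfordCounit (TensorAlgebra.ι k c)
      rw [TensorAlgebra.lift_ι_apply, radfordCounit_ι]
      exact LinearMap.congr_fun hε c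
    have := congrArg AlgHom.toLinearMap key
    rw [AlgHom.comp_toLinearMap] at this
    exact this
  · intro g' ⟨_, _, h3⟩
    apply TensorAlgebra.hom_ext
    ext c
    simp [h3 c]

end RadfordAux

/-- Radford's free bialgebra on a coalgebra: the tensor algebra `T(C)` on a
coalgebra `C` admits a bialgebra structure whose comultiplication and counit are
the unique algebra morphisms extending `(ι ⊗ ι) ∘ Δ_C` and `ε_C`, and it enjoys
the universal property: every coalgebra morphism `f : C → A` into a bialgebra `A`
extends uniquely to a bialgebra morphism `T(C) → A`. -/
theorem radford_free_bialgebra {k : Type*} [Field k] {C : Type*}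
    [AddCommGroup C] [Module k C] [Coalgebra k C] :
    ∃ (Δt : TensorAlgebra k C →ₐ[k] TensorAlgebra k C ⊗[k] TensorAlgebra k C)
      (εt : TensorAlgebra k C →ₐ[k] k),
      (∀ c : C, Δt (TensorAlgebra.ι k c) =
        TensorProduct.map (TensorAlgebra.ι k) (TensorAlgebra.ι k) (comul (R := k) c)) ∧
      (∀ Δ' : TensorAlgebra k C →ₐ[k] TensorAlgebra k C ⊗[k] TensorAlgebra k C,
        (∀ c : C, Δ' (TensorAlgebra.ι k c) =
          TensorProduct.map (TensorAlgebra.ι k) (TensorAlgebra.ι k) (comul (R := k) c)) →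
        Δ' = Δt) ∧
      (∀ c : C, εt (TensorAlgebra.ι k c) = counit (R := k) c) ∧
      (∀ ε' : TensorAlgebra k C →ₐ[k] k,
        (∀ c : C, ε' (TensorAlgebra.ι k c) = counit (R := k) c) → ε' = εt) ∧
      -- coassociativity
      ((TensorProduct.assoc k _ _ _).toLinearMap ∘ₗ
          LinearMap.rTensor _ Δt.toLinearMap ∘ₗ Δt.toLinearMap =
        LinearMap.lTensor _ Δt.toLinearMap ∘ₗ Δt.toLinearMap) ∧
      -- counit axioms
      ((TensorProduct.lid k (TensorAlgebra k C)).toLinearMap ∘ₗ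
          LinearMap.rTensor _ εt.toLinearMap ∘ₗ Δt.toLinearMap = LinearMap.id) ∧
      ((TensorProduct.rid k (TensorAlgebra k C)).toLinearMap ∘ₗ
          LinearMap.lTensor _ εt.toLinearMap ∘ₗ Δt.toLinearMap = LinearMap.id) ∧
      -- universal property
      (∀ (A : Type*) (_ : Ring A) (_ : Bialgebra k A) (f : C →ₗ[k] A),
        (comul (R := k) ∘ₗ f = TensorProduct.map f f ∘ₗ comul (R := k)) →
        (counit (R := k) ∘ₗ f = counit (R := k)) →
        ∃! g : TensorAlgebra k C →ₐ[k] A,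
          (comul (R := k) ∘ₗ g.toLinearMap =
            TensorProduct.map g.toLinearMap g.toLinearMap ∘ₗ Δt.toLinearMap) ∧
          (counit (R := k) ∘ₗ g.toLinearMap = εt.toLinearMap) ∧
          (∀ c : C, g (TensorAlgebra.ι k c) = f c)) := by
  classical
  refine ⟨radfordComul, radfordCounit, radfordComul_ι, ?_, radfordCounit_ι, ?_, ?_, ?_, ?_, ?_⟩
  · intro Δ' h
    apply TensorAlgebra.hom_ext
    ext c
    simp [h c, radfordComul_ι]
  · intro ε' h
    apply TensorAlgebra.hom_ext
    ext c
    simp [h c, radfordCounit_ι]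
  · exact radford_coassoc
  · exact radford_counit_left
  · exact radford_counit_right
  · intro A _ _ f hf he
    exact radford_universal A f hf he
end

section
/- Let H be a Hopf algebra over k and σ : H ⊗ H → k a convolution-invertible normalized 2-cocycle, with convolution inverse σ⁻¹. Define a new multiplication on the underlying coalgebra of H by x ·_σ y := σ(x_1 ⊗ y_1) x_2 y_2 σ⁻¹(x_3 ⊗ y_3). Then ·_σ is associative with unit 1_H, and the coproduct Δ of H is an algebra morphism for ·_σ; thus (H, ·_σ, Δ, ε) is a bialgebra (the Doi twist H_σ). -/
open TensorProduct Coalgebra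

universe u

set_option maxHeartbeats 1000000

namespace DoiTwist

variable {k : Type u} [CommRing k]

section Conv

variable {C : Type*} [AddCommGroup C] [Module k C] [Coalgebra k C]
variable {A : Type*} [Ring A] [Algebra k A]
variable {ι κ : Type*}

/-- Convolution product of linear maps from a coalgebra to an algebra. -/
noncomputable def conv (f g : C →ₗ[k] A) : C →ₗ[k] A :=
  LinearMap.mul' k A ∘ₗ TensorProduct.map f g ∘ₗ comul

/-- The unit of the convolution algebra. -/
noncomputable def convUnit : C →ₗ[k] A :=
  Algebra.linearMap k A ∘ₗ counit

lemma conv_repr (f g : C →ₗ[k] A) (c : C) (r : Coalgebra.Repr k c ι) :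
    conv f g c = ∑ i ∈ r.index, f (r.left i) * g (r.right i) := by
  simp [conv, ← r.eq, map_sum]

lemma sum_counit_smul {c : C} (r : Coalgebra.Repr k c ι) :
    ∑ i ∈ r.index, counit (R := k) (r.left i) • r.right i = c := by
  have h := congrArg (TensorProduct.lid k C) (Coalgebra.sum_counit_tmul_eq r)
  rw [map_sum] at h
  simpa using h

lemma sum_smul_counit {c : C} (r : Coalgebra.Repr k c ι) :
    ∑ i ∈ r.index, counit (R := k) (r.right i) • r.left i = c := by
  have h := congrArg (TensorProduct.rid k C) (Coalgebra.sum_tmul_counit_eq r)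
  rw [map_sum] at h
  simpa using h

lemma conv_unit_right (f : C →ₗ[k] A) : conv f convUnit = f := by
  ext c
  rw [conv_repr f _ c (ℛ k c)]
  simp only [convUnit, LinearMap.comp_apply, Algebra.linearMap_apply]
  calc ∑ i ∈ (ℛ k c).index, f ((ℛ k c).left i) * algebraMap k A (counit ((ℛ k c).right i))
      = ∑ i ∈ (ℛ k c).index, f (counit (R := k) ((ℛ k c).right i) • (ℛ k c).left i) := by
        refine Finset.sum_congr rfl fun i _ => ?_
        rw [map_smul, ← Algebra.commutes, Algebra.smul_def]
    _ = f c := by rw [← map_sum, sum_smul_counit]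

lemma conv_unit_left (f : C →ₗ[k] A) : conv convUnit f = f := by
  ext c
  rw [conv_repr _ f c (ℛ k c)]
  simp only [convUnit, LinearMap.comp_apply, Algebra.linearMap_apply]
  calc ∑ i ∈ (ℛ k c).index, algebraMap k A (counit ((ℛ k c).left i)) * f ((ℛ k c).right i)
      = ∑ i ∈ (ℛ k c).index, f (counit (R := k) ((ℛ k c).left i) • (ℛ k c).right i) := by
        refine Finset.sum_congr rfl fun i _ => ?_
        rw [map_smul, Algebra.smul_def]
    _ = f c := by rw [← map_sum, sum_counit_smul]

lemma conv_assoc (f g h : C →ₗ[k] A) :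
    conv (conv f g) h = conv f (conv g h) := by
  ext c
  set r := ℛ k c with hr
  set r1 : ∀ i : r.ι, Coalgebra.Repr k (r.left i) (C × C) := fun i => ℛ k (r.left i) with hr1
  set r2 : ∀ i : r.ι, Coalgebra.Repr k (r.right i) (C × C) := fun i => ℛ k (r.right i) with hr2
  have key := Coalgebra.sum_map_tmul_tmul_eq (R := k) (f := f) (g := g) (h := h) (a := c)
    (repr := r) (a₁ := r1) (a₂ := r2)
  have key2 := congrArg (LinearMap.mul' k A ∘ₗ LinearMap.lTensor A (LinearMap.mul' k A)) key
  simp only [map_sum, LinearMap.comp_apply, LinearMap.lTensor_tmul, LinearMap.mul'_apply] at key2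
  rw [conv_repr _ h c r, conv_repr f _ c r]
  have lhs : ∑ i ∈ r.index, conv f g (r.left i) * h (r.right i)
      = ∑ i ∈ r.index, ∑ j ∈ (r1 i).index,
          f ((r1 i).left j) * ((g ((r1 i).right j)) * h (r.right i)) := by
    refine Finset.sum_congr rfl fun i _ => ?_
    rw [conv_repr f g _ (r1 i), Finset.sum_mul]
    exact Finset.sum_congr rfl fun j _ => by rw [mul_assoc]
  have rhs : ∑ i ∈ r.index, f (r.left i) * conv g h (r.right i)
      = ∑ i ∈ r.index, ∑ j ∈ (r2 i).index,
          f (r.left i) * (g ((r2 i).left j) * h ((r2 i).right j)) := by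
    refine Finset.sum_congr rfl fun i _ => ?_
    rw [conv_repr g h _ (r2 i), Finset.mul_sum]
  rw [lhs, rhs, ← key2]

/-- Precomposition with a map commuting with comultiplication distributes over convolution. -/
lemma conv_comp {D : Type*} [AddCommGroup D] [Module k D] [Coalgebra k D]
    (f g : C →ₗ[k] A) (φ : D →ₗ[k] C)
    (hφ : comul ∘ₗ φ = TensorProduct.map φ φ ∘ₗ comul) :
    (conv f g) ∘ₗ φ = conv (f ∘ₗ φ) (g ∘ₗ φ) := by
  ext d
  have h := LinearMap.congr_fun hφ d
  simp only [LinearMap.comp_apply] at h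
  simp only [conv, LinearMap.comp_apply, h]
  rw [TensorProduct.map_comp]
  simp only [LinearMap.comp_apply]

/-- Postcomposition with a multiplicative map distributes over convolution. -/
lemma comp_conv {B : Type*} [Ring B] [Algebra k B]
    (f g : C →ₗ[k] A) (ψ : A →ₗ[k] B)
    (hψ : ψ ∘ₗ LinearMap.mul' k A = LinearMap.mul' k B ∘ₗ TensorProduct.map ψ ψ) :
    ψ ∘ₗ conv f g = conv (ψ ∘ₗ f) (ψ ∘ₗ g) := by
  simp only [conv, ← LinearMap.comp_assoc, hψ]
  rw [LinearMap.comp_assoc _ _ (LinearMap.mul' k B), ← TensorProduct.map_comp]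

lemma unit_comp {D : Type*} [AddCommGroup D] [Module k D] [Coalgebra k D]
    (φ : D →ₗ[k] C) (hφ : counit (R := k) ∘ₗ φ = counit) :
    (convUnit (C := C) (A := A)) ∘ₗ φ = convUnit := by
  rw [convUnit, LinearMap.comp_assoc, hφ, convUnit]

/-- Uniqueness of convolution inverses. -/
lemma conv_inv_unique {x y z : C →ₗ[k] A}
    (hxy : conv x y = convUnit) (hzx : conv z x = convUnit) : y = z := by
  have : conv z (conv x y) = conv (conv z x) y := (conv_assoc z x y).symm
  rw [hxy, hzx, conv_unit_right, conv_unit_left] at this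
  exact this.symm

lemma conv_mul_inv {a b a' b' : C →ₗ[k] A}
    (ha : conv a a' = convUnit) (hb : conv b b' = convUnit) :
    conv (conv a b) (conv b' a') = convUnit := by
  rw [conv_assoc, ← conv_assoc b b' a', hb, conv_unit_left, ha]

lemma conv_inv_mul {a b a' b' : C →ₗ[k] A}
    (ha : conv a' a = convUnit) (hb : conv b' b = convUnit) :
    conv (conv b' a') (conv a b) = convUnit := by
  rw [conv_assoc, ← conv_assoc a' a b, ha, conv_unit_left, hb]

/-- Convolution of two scalar-valued maps pushed into `A`. -/
lemma conv_algebraMap (a b : C →ₗ[k] k) :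
    conv (Algebra.linearMap k A ∘ₗ a) (Algebra.linearMap k A ∘ₗ b) =
      Algebra.linearMap k A ∘ₗ conv a b := by
  rw [← comp_conv]
  apply TensorProduct.ext'
  intro r s
  simp only [LinearMap.comp_apply, LinearMap.mul'_apply, TensorProduct.map_tmul,
    Algebra.linearMap_apply, Algebra.algebraMap_eq_smul_one, smul_mul_smul_comm, one_mul,
    smul_smul, mul_comm]

end Conv

section TensorDomain

variable {C : Type u} [AddCommGroup C] [Module k C] [Coalgebra k C]
variable {D : Type u} [AddCommGroup D] [Module k D] [Coalgebra k D]
variable {A : Type*} [Ring A] [Algebra k A]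
variable {B : Type*} [Ring B] [Algebra k B]
variable {ι κ : Type*}

/-- Projection `C ⊗ D → C` killing the second factor by the counit. -/
noncomputable def pL : C ⊗[k] D →ₗ[k] C :=
  (TensorProduct.rid k C).toLinearMap ∘ₗ LinearMap.lTensor C (counit (R := k) (A := D))

/-- Projection `C ⊗ D → D` killing the first factor by the counit. -/
noncomputable def pR : C ⊗[k] D →ₗ[k] D :=
  (TensorProduct.lid k D).toLinearMap ∘ₗ LinearMap.rTensor D (counit (R := k) (A := C))

@[simp] lemma pL_tmul (c : C) (d : D) : pL (c ⊗ₜ[k] d) = counit (R := k) d • c := by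
  simp [pL]

@[simp] lemma pR_tmul (c : C) (d : D) : pR (c ⊗ₜ[k] d) = counit (R := k) c • d := by
  simp [pR]

lemma comul_tmul (c : C) (d : D) (rc : Coalgebra.Repr k c ι) (rd : Coalgebra.Repr k d κ) :
    comul (R := k) (c ⊗ₜ[k] d) = ∑ i ∈ rc.index, ∑ j ∈ rd.index,
      (rc.left i ⊗ₜ[k] rd.left j) ⊗ₜ[k] (rc.right i ⊗ₜ[k] rd.right j) := by
  rw [TensorProduct.comul_def]
  simp only [LinearMap.comp_apply, TensorProduct.AlgebraTensorModule.map_tmul, ← rc.eq, ← rd.eq,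
    TensorProduct.sum_tmul, TensorProduct.tmul_sum, map_sum]
  rw [Finset.sum_comm]
  simp only [TensorProduct.AlgebraTensorModule.tensorTensorTensorComm_tmul, LinearEquiv.coe_coe]

lemma counit_tmul (c : C) (d : D) :
    counit (R := k) (c ⊗ₜ[k] d) = counit (R := k) c * counit (R := k) d := by
  rw [TensorProduct.counit_def]
  simp [mul_comm]

lemma conv_tmul (f g : C ⊗[k] D →ₗ[k] A) (c : C) (d : D)
    (rc : Coalgebra.Repr k c ι) (rd : Coalgebra.Repr k d κ) :
    conv f g (c ⊗ₜ[k] d) = ∑ i ∈ rc.index, ∑ j ∈ rd.index,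
      f (rc.left i ⊗ₜ[k] rd.left j) * g (rc.right i ⊗ₜ[k] rd.right j) := by
  rw [conv, LinearMap.comp_apply, LinearMap.comp_apply, comul_tmul c d rc rd]
  simp [map_sum]

lemma sum_counit_mul_counit {d : D} (rd : Coalgebra.Repr k d κ) :
    ∑ j ∈ rd.index, counit (R := k) (rd.left j) * counit (R := k) (rd.right j)
      = counit (R := k) d := by
  have h := congrArg (counit (R := k)) (sum_counit_smul rd)
  simpa [map_sum, smul_eq_mul] using h

lemma comul_comp_pL :
    comul (R := k) ∘ₗ (pL (C := C) (D := D)) = TensorProduct.map pL pL ∘ₗ comul := by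
  apply TensorProduct.ext'
  intro c d
  set rc := ℛ k c
  set rd := ℛ k d
  simp only [LinearMap.comp_apply, pL_tmul, map_smul, comul_tmul c d rc rd, map_sum,
    TensorProduct.map_tmul]
  rw [← rc.eq, Finset.smul_sum]
  refine Finset.sum_congr rfl fun i _ => ?_
  calc counit (R := k) d • (rc.left i ⊗ₜ[k] rc.right i)
      = (∑ j ∈ rd.index, counit (R := k) (rd.left j) * counit (R := k) (rd.right j)) •
          (rc.left i ⊗ₜ[k] rc.right i) := by rw [sum_counit_mul_counit rd]
    _ = ∑ j ∈ rd.index, (counit (R := k) (rd.left j) • rc.left i) ⊗ₜ[k]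
          (counit (R := k) (rd.right j) • rc.right i) := by
        rw [Finset.sum_smul]
        exact Finset.sum_congr rfl fun j _ => by rw [mul_smul, ← tmul_smul, ← smul_tmul']

lemma counit_comp_pL :
    counit (R := k) ∘ₗ (pL (C := C) (D := D)) = counit := by
  apply TensorProduct.ext'
  intro c d
  simp [counit_tmul, mul_comm]

lemma comul_comp_pR :
    comul (R := k) ∘ₗ (pR (C := C) (D := D)) = TensorProduct.map pR pR ∘ₗ comul := by
  apply TensorProduct.ext'
  intro c d
  set rc := ℛ k c
  set rd := ℛ k d
  simp only [LinearMap.comp_apply, pR_tmul, map_smul, comul_tmul c d rc rd, map_sum,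
    TensorProduct.map_tmul]
  rw [← rd.eq, Finset.smul_sum, Finset.sum_comm]
  refine Finset.sum_congr rfl fun j _ => ?_
  calc counit (R := k) c • (rd.left j ⊗ₜ[k] rd.right j)
      = (∑ i ∈ rc.index, counit (R := k) (rc.left i) * counit (R := k) (rc.right i)) •
          (rd.left j ⊗ₜ[k] rd.right j) := by rw [sum_counit_mul_counit rc]
    _ = ∑ i ∈ rc.index, (counit (R := k) (rc.left i) • rd.left j) ⊗ₜ[k]
          (counit (R := k) (rc.right i) • rd.right j) := by
        rw [Finset.sum_smul]
        exact Finset.sum_congr rfl fun i _ => by rw [mul_smul, ← tmul_smul, ← smul_tmul']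

lemma counit_comp_pR :
    counit (R := k) ∘ₗ (pR (C := C) (D := D)) = counit := by
  apply TensorProduct.ext'
  intro c d
  simp [counit_tmul, mul_comm]


lemma sum_counit_smul_apply (L : D →ₗ[k] B) {z : D} (rz : Coalgebra.Repr k z κ) :
    ∑ j ∈ rz.index, counit (R := k) (rz.left j) • L (rz.right j) = L z := by
  simp_rw [← map_smul, ← map_sum, sum_counit_smul]

lemma sum_smul_counit_apply (L : D →ₗ[k] B) {z : D} (rz : Coalgebra.Repr k z κ) :
    ∑ j ∈ rz.index, counit (R := k) (rz.right j) • L (rz.left j) = L z := by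
  simp_rw [← map_smul, ← map_sum, sum_smul_counit]

/-- Pulling a scalar left factor out of a convolution under `rTensor`. -/
lemma rTensor_conv_scalar_left (F : A ⊗[k] D →ₗ[k] B) (a : C →ₗ[k] k) (w : C →ₗ[k] A) :
    F ∘ₗ LinearMap.rTensor D (conv (Algebra.linearMap k A ∘ₗ a) w) =
      conv (Algebra.linearMap k B ∘ₗ (a ∘ₗ pL)) (F ∘ₗ LinearMap.rTensor D w) := by
  apply TensorProduct.ext'
  intro c z
  set rc := ℛ k c
  set rz := ℛ k z
  rw [LinearMap.comp_apply, LinearMap.rTensor_tmul, conv_repr _ w c rc,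
    conv_tmul _ _ c z rc rz]
  calc F ((∑ i ∈ rc.index,
        (Algebra.linearMap k A ∘ₗ a) (rc.left i) * w (rc.right i)) ⊗ₜ[k] z)
      = ∑ i ∈ rc.index, a (rc.left i) • F (w (rc.right i) ⊗ₜ[k] z) := by
        rw [TensorProduct.sum_tmul, map_sum]
        refine Finset.sum_congr rfl fun i _ => ?_
        rw [LinearMap.comp_apply, Algebra.linearMap_apply, ← Algebra.smul_def,
          ← smul_tmul', map_smul]
    _ = ∑ i ∈ rc.index, ∑ j ∈ rz.index,
          (Algebra.linearMap k B ∘ₗ a ∘ₗ pL) (rc.left i ⊗ₜ[k] rz.left j) *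
            (F ∘ₗ LinearMap.rTensor D w) (rc.right i ⊗ₜ[k] rz.right j) := by
        refine Finset.sum_congr rfl fun i _ => ?_
        have : ∀ j ∈ rz.index,
            (Algebra.linearMap k B ∘ₗ a ∘ₗ pL) (rc.left i ⊗ₜ[k] rz.left j) *
              (F ∘ₗ LinearMap.rTensor D w) (rc.right i ⊗ₜ[k] rz.right j)
            = a (rc.left i) • (counit (R := k) (rz.left j) •
                F (w (rc.right i) ⊗ₜ[k] rz.right j)) := by
          intro j _
          simp only [LinearMap.comp_apply, pL_tmul, map_smul, Algebra.linearMap_apply,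
            LinearMap.rTensor_tmul, ← Algebra.smul_def, smul_eq_mul, mul_smul]
          rw [smul_comm]
        rw [Finset.sum_congr rfl this, ← Finset.smul_sum]
        congr 1
        have h := sum_counit_smul_apply (F ∘ₗ TensorProduct.mk k A D (w (rc.right i))) rz
        simp only [LinearMap.comp_apply, TensorProduct.mk_apply] at h
        exact h.symm


/-- Pulling a scalar right factor out of a convolution under `rTensor`. -/
lemma rTensor_conv_scalar_right (F : A ⊗[k] D →ₗ[k] B) (b : C →ₗ[k] k) (w : C →ₗ[k] A) :
    F ∘ₗ LinearMap.rTensor D (conv w (Algebra.linearMap k A ∘ₗ b)) =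
      conv (F ∘ₗ LinearMap.rTensor D w) (Algebra.linearMap k B ∘ₗ (b ∘ₗ pL)) := by
  apply TensorProduct.ext'
  intro c z
  set rc := ℛ k c
  set rz := ℛ k z
  rw [LinearMap.comp_apply, LinearMap.rTensor_tmul, conv_repr w _ c rc,
    conv_tmul _ _ c z rc rz]
  calc F ((∑ i ∈ rc.index,
        w (rc.left i) * (Algebra.linearMap k A ∘ₗ b) (rc.right i)) ⊗ₜ[k] z)
      = ∑ i ∈ rc.index, b (rc.right i) • F (w (rc.left i) ⊗ₜ[k] z) := by
        rw [TensorProduct.sum_tmul, map_sum]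
        refine Finset.sum_congr rfl fun i _ => ?_
        rw [LinearMap.comp_apply, Algebra.linearMap_apply, ← Algebra.commutes,
          ← Algebra.smul_def, ← smul_tmul', map_smul]
    _ = ∑ i ∈ rc.index, ∑ j ∈ rz.index,
          (F ∘ₗ LinearMap.rTensor D w) (rc.left i ⊗ₜ[k] rz.left j) *
            (Algebra.linearMap k B ∘ₗ b ∘ₗ pL) (rc.right i ⊗ₜ[k] rz.right j) := by
        refine Finset.sum_congr rfl fun i _ => ?_
        have : ∀ j ∈ rz.index,
            (F ∘ₗ LinearMap.rTensor D w) (rc.left i ⊗ₜ[k] rz.left j) *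
              (Algebra.linearMap k B ∘ₗ b ∘ₗ pL) (rc.right i ⊗ₜ[k] rz.right j)
            = b (rc.right i) • (counit (R := k) (rz.right j) •
                F (w (rc.left i) ⊗ₜ[k] rz.left j)) := by
          intro j _
          simp only [LinearMap.comp_apply, pL_tmul, map_smul, Algebra.linearMap_apply,
            LinearMap.rTensor_tmul, ← Algebra.commutes, ← Algebra.smul_def, smul_eq_mul,
            mul_smul]
          rw [smul_comm]
        rw [Finset.sum_congr rfl this, ← Finset.smul_sum]
        congr 1
        have h := sum_smul_counit_apply (F ∘ₗ TensorProduct.mk k A D (w (rc.left i))) rz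
        simp only [LinearMap.comp_apply, TensorProduct.mk_apply] at h
        exact h.symm

/-- Pulling a scalar left factor out of a convolution under `lTensor`. -/
lemma lTensor_conv_scalar_left (F : D ⊗[k] A →ₗ[k] B) (a : C →ₗ[k] k) (w : C →ₗ[k] A) :
    F ∘ₗ LinearMap.lTensor D (conv (Algebra.linearMap k A ∘ₗ a) w) =
      conv (Algebra.linearMap k B ∘ₗ (a ∘ₗ pR)) (F ∘ₗ LinearMap.lTensor D w) := by
  apply TensorProduct.ext'
  intro z c
  set rc := ℛ k c
  set rz := ℛ k z
  rw [LinearMap.comp_apply, LinearMap.lTensor_tmul, conv_repr _ w c rc,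
    conv_tmul _ _ z c rz rc]
  calc F (z ⊗ₜ[k] (∑ i ∈ rc.index,
        (Algebra.linearMap k A ∘ₗ a) (rc.left i) * w (rc.right i)))
      = ∑ i ∈ rc.index, a (rc.left i) • F (z ⊗ₜ[k] w (rc.right i)) := by
        rw [TensorProduct.tmul_sum, map_sum]
        refine Finset.sum_congr rfl fun i _ => ?_
        rw [LinearMap.comp_apply, Algebra.linearMap_apply, ← Algebra.smul_def,
          tmul_smul, map_smul]
    _ = ∑ j ∈ rz.index, ∑ i ∈ rc.index,
          (Algebra.linearMap k B ∘ₗ a ∘ₗ pR) (rz.left j ⊗ₜ[k] rc.left i) *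
            (F ∘ₗ LinearMap.lTensor D w) (rz.right j ⊗ₜ[k] rc.right i) := by
        rw [Finset.sum_comm]
        refine Finset.sum_congr rfl fun i _ => ?_
        have : ∀ j ∈ rz.index,
            (Algebra.linearMap k B ∘ₗ a ∘ₗ pR) (rz.left j ⊗ₜ[k] rc.left i) *
              (F ∘ₗ LinearMap.lTensor D w) (rz.right j ⊗ₜ[k] rc.right i)
            = a (rc.left i) • (counit (R := k) (rz.left j) •
                F (rz.right j ⊗ₜ[k] w (rc.right i))) := by
          intro j _
          simp only [LinearMap.comp_apply, pR_tmul, map_smul, Algebra.linearMap_apply,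
            LinearMap.lTensor_tmul, ← Algebra.smul_def, smul_eq_mul, mul_smul]
          rw [smul_comm]
        rw [Finset.sum_congr rfl this, ← Finset.smul_sum]
        congr 1
        have h := sum_counit_smul_apply
          (F ∘ₗ (TensorProduct.mk k D A).flip (w (rc.right i))) rz
        simp only [LinearMap.comp_apply, LinearMap.flip_apply, TensorProduct.mk_apply] at h
        exact h.symm

/-- Pulling a scalar right factor out of a convolution under `lTensor`. -/
lemma lTensor_conv_scalar_right (F : D ⊗[k] A →ₗ[k] B) (b : C →ₗ[k] k) (w : C →ₗ[k] A) :
    F ∘ₗ LinearMap.lTensor D (conv w (Algebra.linearMap k A ∘ₗ b)) =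
      conv (F ∘ₗ LinearMap.lTensor D w) (Algebra.linearMap k B ∘ₗ (b ∘ₗ pR)) := by
  apply TensorProduct.ext'
  intro z c
  set rc := ℛ k c
  set rz := ℛ k z
  rw [LinearMap.comp_apply, LinearMap.lTensor_tmul, conv_repr w _ c rc,
    conv_tmul _ _ z c rz rc]
  calc F (z ⊗ₜ[k] (∑ i ∈ rc.index,
        w (rc.left i) * (Algebra.linearMap k A ∘ₗ b) (rc.right i)))
      = ∑ i ∈ rc.index, b (rc.right i) • F (z ⊗ₜ[k] w (rc.left i)) := by
        rw [TensorProduct.tmul_sum, map_sum]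
        refine Finset.sum_congr rfl fun i _ => ?_
        rw [LinearMap.comp_apply, Algebra.linearMap_apply, ← Algebra.commutes,
          ← Algebra.smul_def, tmul_smul, map_smul]
    _ = ∑ j ∈ rz.index, ∑ i ∈ rc.index,
          (F ∘ₗ LinearMap.lTensor D w) (rz.left j ⊗ₜ[k] rc.left i) *
            (Algebra.linearMap k B ∘ₗ b ∘ₗ pR) (rz.right j ⊗ₜ[k] rc.right i) := by
        rw [Finset.sum_comm]
        refine Finset.sum_congr rfl fun i _ => ?_
        have : ∀ j ∈ rz.index,
            (F ∘ₗ LinearMap.lTensor D w) (rz.left j ⊗ₜ[k] rc.left i) *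
              (Algebra.linearMap k B ∘ₗ b ∘ₗ pR) (rz.right j ⊗ₜ[k] rc.right i)
            = b (rc.right i) • (counit (R := k) (rz.right j) •
                F (rz.left j ⊗ₜ[k] w (rc.left i))) := by
          intro j _
          simp only [LinearMap.comp_apply, pR_tmul, map_smul, Algebra.linearMap_apply,
            LinearMap.lTensor_tmul, ← Algebra.commutes, ← Algebra.smul_def, smul_eq_mul,
            mul_smul]
          rw [smul_comm]
        rw [Finset.sum_congr rfl this, ← Finset.smul_sum]
        congr 1
        have h := sum_smul_counit_apply
          (F ∘ₗ (TensorProduct.mk k D A).flip (w (rc.left i))) rz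
        simp only [LinearMap.comp_apply, LinearMap.flip_apply, TensorProduct.mk_apply] at h
        exact h.symm

end TensorDomain

section Repr

variable {C : Type*} [AddCommGroup C] [Module k C] [Coalgebra k C]
variable {C' : Type*} [AddCommGroup C'] [Module k C'] [Coalgebra k C']
variable {ι : Type*}

/-- Push a representation forward along a map commuting with comultiplication. -/
noncomputable def mapRepr (f : C →ₗ[k] C')
    (hf : comul ∘ₗ f = TensorProduct.map f f ∘ₗ comul) {c : C} (r : Coalgebra.Repr k c ι) :
    Coalgebra.Repr k (f c) ι where
  index := r.index
  left := f ∘ r.left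
  right := f ∘ r.right
  eq := by
    have h := LinearMap.congr_fun hf c
    simp only [LinearMap.comp_apply] at h
    rw [Function.comp_def, Function.comp_def, h, ← r.eq, map_sum]
    simp

@[simp] lemma mapRepr_index (f : C →ₗ[k] C') (hf) {c : C} (r : Coalgebra.Repr k c ι) :
    (mapRepr f hf r).index = r.index := rfl

end Repr

section Hopf

variable {H : Type u} [Ring H] [Bialgebra k H]

local notation "μ" => LinearMap.mul' k H
local notation "η" => Algebra.linearMap

lemma counit_comp_mul : counit (R := k) ∘ₗ μ = counit (R := k) (A := H ⊗[k] H) := by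
  apply TensorProduct.ext'
  intro x y
  simp [counit_tmul, Bialgebra.counit_mul, mul_comm]

lemma comul_comp_mul' :
    comul (R := k) ∘ₗ μ = LinearMap.mul' k (H ⊗[k] H) ∘ₗ
      TensorProduct.map (comul (R := k)) (comul (R := k)) := by
  apply TensorProduct.ext'
  intro x y
  simp [Bialgebra.comul_mul]

lemma comul_comp_mul :
    comul (R := k) ∘ₗ μ = TensorProduct.map μ μ ∘ₗ comul (R := k) (A := H ⊗[k] H) := by
  apply TensorProduct.ext'
  intro x y
  rw [LinearMap.comp_apply, LinearMap.comp_apply, LinearMap.mul'_apply,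
    Bialgebra.comul_mul, comul_tmul x y (ℛ k x) (ℛ k y), map_sum, ← (ℛ k x).eq, ← (ℛ k y).eq,
    Finset.sum_mul_sum]
  simp [Algebra.TensorProduct.tmul_mul_tmul]

/-- Twisted multiplication, in convolution form. -/
noncomputable def twMul (σ σinv : H ⊗[k] H →ₗ[k] k) : H ⊗[k] H →ₗ[k] H :=
  conv (η k H ∘ₗ σ) (conv μ (η k H ∘ₗ σinv))

lemma conv_scalar_left {C : Type*} [AddCommGroup C] [Module k C] [Coalgebra k C]
    {A : Type*} [Ring A] [Algebra k A] (a : C →ₗ[k] k) (X : C →ₗ[k] A) :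
    conv (η k A ∘ₗ a) X =
      (TensorProduct.lid k A).toLinearMap ∘ₗ TensorProduct.map a X ∘ₗ comul := by
  rw [conv]
  congr 1
  rw [← LinearMap.comp_assoc, ← LinearMap.comp_assoc]
  congr 1
  apply TensorProduct.ext'
  intro c c'
  simp [Algebra.smul_def]

lemma conv_scalar_right {C : Type*} [AddCommGroup C] [Module k C] [Coalgebra k C]
    {A : Type*} [Ring A] [Algebra k A] (b : C →ₗ[k] k) (X : C →ₗ[k] A) :
    conv X (η k A ∘ₗ b) =
      (TensorProduct.rid k A).toLinearMap ∘ₗ TensorProduct.map X b ∘ₗ comul := by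
  rw [conv]
  congr 1
  rw [← LinearMap.comp_assoc, ← LinearMap.comp_assoc]
  congr 1
  apply TensorProduct.ext'
  intro c c'
  simp [Algebra.smul_def, ← Algebra.commutes]

/-- The twisted multiplication from the theorem statement, identified with `twMul`. -/
lemma twMul_eq (σ σinv : H ⊗[k] H →ₗ[k] k) :
    ((TensorProduct.lid k H).toLinearMap ∘ₗ
      TensorProduct.map σ
        ((TensorProduct.rid k H).toLinearMap ∘ₗ
          TensorProduct.map (LinearMap.mul' k H) σinv) ∘ₗ
      LinearMap.lTensor (H ⊗[k] H) (comul (R := k) (A := H ⊗[k] H)) ∘ₗ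
      comul (R := k) (A := H ⊗[k] H)) = twMul σ σinv := by
  rw [twMul, conv_scalar_right, conv_scalar_left]
  congr 1
  rw [← LinearMap.comp_assoc]
  congr 1
  apply TensorProduct.ext'
  intro a b
  simp

/-- The counit is multiplicative for the twisted product. -/
lemma counit_comp_twMul (σ σinv : H ⊗[k] H →ₗ[k] k)
    (hinv₁ : conv σ σinv = counit (R := k) (A := (H ⊗[k] H))) :
    counit (R := k) ∘ₗ twMul σ σinv = counit (R := k) (A := (H ⊗[k] H)) := by
  have hcu : (counit (R := k) (A := H)) ∘ₗ μ =
      LinearMap.mul' k k ∘ₗ TensorProduct.map counit counit := by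
    apply TensorProduct.ext'
    intro x y
    simp [Bialgebra.counit_mul]
  rw [twMul, comp_conv _ _ _ hcu, comp_conv _ _ _ hcu]
  have h1 : (counit (R := k) (A := H)) ∘ₗ (η k H ∘ₗ σ) = σ := by
    ext x; simp
  have h2 : (counit (R := k) (A := H)) ∘ₗ (η k H ∘ₗ σinv) = σinv := by
    ext x; simp
  have h3 : (counit (R := k) (A := H)) ∘ₗ μ = counit := counit_comp_mul
  rw [h1, h2, h3]
  have h4 : (counit (R := k) (A := H ⊗[k] H)) = convUnit := by
    ext x; simp [convUnit]
  rw [h4, conv_unit_left, hinv₁, h4]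

end Hopf


section Incl

variable {A : Type u} [Ring A] [Bialgebra k A]
variable {B : Type u} [AddCommGroup B] [Module k B] [Coalgebra k B]

/-- A representation of `comul 1` in a bialgebra. -/
noncomputable def oneRepr : Coalgebra.Repr k (1 : A) Unit where
  index := Finset.univ
  left := fun _ => 1
  right := fun _ => 1
  eq := by simp [Bialgebra.comul_one, Algebra.TensorProduct.one_def]

lemma comul_comp_inclR :
    comul (R := k) ∘ₗ TensorProduct.mk k A B 1 =
      TensorProduct.map (TensorProduct.mk k A B 1) (TensorProduct.mk k A B 1) ∘ₗ comul := by
  ext b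
  rw [LinearMap.comp_apply, LinearMap.comp_apply, TensorProduct.mk_apply,
    comul_tmul (1 : A) b (oneRepr (k := k)) (ℛ k b), ← (ℛ k b).eq, map_sum]
  simp [oneRepr]

lemma counit_comp_inclR :
    counit (R := k) ∘ₗ TensorProduct.mk k A B 1 = counit := by
  ext b
  simp [counit_tmul]

lemma comul_comp_inclL :
    comul (R := k) ∘ₗ (TensorProduct.mk k B A).flip 1 =
      TensorProduct.map ((TensorProduct.mk k B A).flip 1)
        ((TensorProduct.mk k B A).flip 1) ∘ₗ comul := by
  ext b
  rw [LinearMap.comp_apply, LinearMap.comp_apply, LinearMap.flip_apply, TensorProduct.mk_apply,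
    comul_tmul b (1 : A) (ℛ k b) (oneRepr (k := k)), ← (ℛ k b).eq, map_sum]
  simp [oneRepr]

lemma counit_comp_inclL :
    counit (R := k) ∘ₗ (TensorProduct.mk k B A).flip 1 = counit := by
  ext b
  simp [counit_tmul]

end Incl

section Hopf2

variable {H : Type u} [Ring H] [Bialgebra k H]

local notation "μ" => LinearMap.mul' k H
local notation "ηη" => Algebra.linearMap

lemma mul_comp_map_incl :
    LinearMap.mul' k (H ⊗[k] H) ∘ₗ
      TensorProduct.map ((TensorProduct.mk k H H).flip 1) (TensorProduct.mk k H H 1) =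
      LinearMap.id := by
  apply TensorProduct.ext'
  intro x y
  simp [Algebra.TensorProduct.tmul_mul_tmul]

lemma map_comp_comul_eq_conv {C : Type u} [AddCommGroup C] [Module k C] [Coalgebra k C]
    (f g : C →ₗ[k] H) :
    TensorProduct.map f g ∘ₗ comul =
      conv ((TensorProduct.mk k H H).flip 1 ∘ₗ f) (TensorProduct.mk k H H 1 ∘ₗ g) := by
  rw [conv, TensorProduct.map_comp]
  simp only [← LinearMap.comp_assoc]
  rw [mul_comp_map_incl]
  simp only [LinearMap.id_comp]

lemma inclL_comp_mul :
    (TensorProduct.mk k H H).flip 1 ∘ₗ μ = LinearMap.mul' k (H ⊗[k] H) ∘ₗ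
      TensorProduct.map ((TensorProduct.mk k H H).flip 1) ((TensorProduct.mk k H H).flip 1) := by
  apply TensorProduct.ext'
  intro x y
  simp [Algebra.TensorProduct.tmul_mul_tmul]

lemma inclR_comp_mul :
    TensorProduct.mk k H H 1 ∘ₗ μ = LinearMap.mul' k (H ⊗[k] H) ∘ₗ
      TensorProduct.map (TensorProduct.mk k H H 1) (TensorProduct.mk k H H 1) := by
  apply TensorProduct.ext'
  intro x y
  simp [Algebra.TensorProduct.tmul_mul_tmul]

lemma inclL_comp_linearMap :
    (TensorProduct.mk k H H).flip 1 ∘ₗ ηη k H = ηη k (H ⊗[k] H) := by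
  ext
  simp [Algebra.TensorProduct.one_def, Algebra.algebraMap_eq_smul_one, smul_tmul']

lemma inclR_comp_linearMap :
    TensorProduct.mk k H H 1 ∘ₗ ηη k H = ηη k (H ⊗[k] H) := by
  ext
  simp [Algebra.TensorProduct.one_def, Algebra.algebraMap_eq_smul_one, tmul_smul]

lemma comul_comp_linearMap : comul (R := k) ∘ₗ ηη k H = ηη k (H ⊗[k] H) := by
  ext
  simp [Algebra.TensorProduct.one_def]

set_option maxHeartbeats 1000000 in
/-- The coproduct is multiplicative for the twisted product. -/
lemma comul_comp_twMul (σ σinv : H ⊗[k] H →ₗ[k] k)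
    (hinv₂ : conv σinv σ = counit (R := k) (A := (H ⊗[k] H))) :
    comul (R := k) ∘ₗ twMul σ σinv =
      TensorProduct.map (twMul σ σinv) (twMul σ σinv) ∘ₗ comul := by
  set iL : H →ₗ[k] H ⊗[k] H := (TensorProduct.mk k H H).flip 1 with hiL
  set iR : H →ₗ[k] H ⊗[k] H := TensorProduct.mk k H H 1 with hiR
  set S₂ : H ⊗[k] H →ₗ[k] H ⊗[k] H := ηη k (H ⊗[k] H) ∘ₗ σ with hS
  set Sinv₂ : H ⊗[k] H →ₗ[k] H ⊗[k] H := ηη k (H ⊗[k] H) ∘ₗ σinv with hSinv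
  set L : H ⊗[k] H →ₗ[k] H ⊗[k] H := iL ∘ₗ μ with hLdef
  set R : H ⊗[k] H →ₗ[k] H ⊗[k] H := iR ∘ₗ μ with hRdef
  have hunit : (convUnit : H ⊗[k] H →ₗ[k] H ⊗[k] H) = ηη k (H ⊗[k] H) ∘ₗ counit := rfl
  have hmid : TensorProduct.map μ μ ∘ₗ comul = conv L R :=
    map_comp_comul_eq_conv μ μ
  have hL : comul (R := k) ∘ₗ twMul σ σinv = conv S₂ (conv (conv L R) Sinv₂) := by
    rw [twMul, comp_conv _ _ _ comul_comp_mul', comp_conv _ _ _ comul_comp_mul',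
      ← LinearMap.comp_assoc, comul_comp_linearMap, ← LinearMap.comp_assoc,
      comul_comp_linearMap, comul_comp_mul, hmid]
  have hRR : TensorProduct.map (twMul σ σinv) (twMul σ σinv) ∘ₗ comul =
      conv (conv S₂ (conv L Sinv₂)) (conv S₂ (conv R Sinv₂)) := by
    rw [map_comp_comul_eq_conv (twMul σ σinv) (twMul σ σinv)]
    rw [twMul, comp_conv _ _ _ inclL_comp_mul, comp_conv _ _ _ inclL_comp_mul,
      comp_conv _ _ _ inclR_comp_mul, comp_conv _ _ _ inclR_comp_mul]
    simp only [← LinearMap.comp_assoc, inclL_comp_linearMap, inclR_comp_linearMap]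
    rfl
  rw [hL, hRR]
  rw [conv_assoc S₂ (conv L Sinv₂) (conv S₂ (conv R Sinv₂)),
    conv_assoc L Sinv₂ (conv S₂ (conv R Sinv₂)),
    ← conv_assoc Sinv₂ S₂ (conv R Sinv₂),
    hSinv, hS, conv_algebraMap σinv σ, hinv₂, ← hunit, conv_unit_left,
    ← conv_assoc L R Sinv₂]

lemma comul_comp_rTensor_mul :
    comul (R := k) ∘ₗ LinearMap.rTensor H μ =
      TensorProduct.map (LinearMap.rTensor H μ) (LinearMap.rTensor H μ) ∘ₗ
        comul (R := k) (A := (H ⊗[k] H) ⊗[k] H) := by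
  apply TensorProduct.ext'
  intro c z
  rw [LinearMap.comp_apply, LinearMap.comp_apply, LinearMap.rTensor_tmul,
    comul_tmul (μ c) z (mapRepr μ comul_comp_mul (ℛ k c)) (ℛ k z),
    comul_tmul c z (ℛ k c) (ℛ k z), map_sum]
  simp [mapRepr, map_sum]

lemma counit_comp_rTensor_mul :
    counit (R := k) ∘ₗ LinearMap.rTensor H μ =
      counit (R := k) (A := (H ⊗[k] H) ⊗[k] H) := by
  apply TensorProduct.ext'
  intro c z
  have h := LinearMap.congr_fun (counit_comp_mul (k := k) (H := H)) c
  simp only [LinearMap.comp_apply] at h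
  simp [counit_tmul, h]

lemma comul_comp_lTensor_mul :
    comul (R := k) ∘ₗ LinearMap.lTensor H μ =
      TensorProduct.map (LinearMap.lTensor H μ) (LinearMap.lTensor H μ) ∘ₗ
        comul (R := k) (A := H ⊗[k] (H ⊗[k] H)) := by
  apply TensorProduct.ext'
  intro z c
  rw [LinearMap.comp_apply, LinearMap.comp_apply, LinearMap.lTensor_tmul,
    comul_tmul z (μ c) (ℛ k z) (mapRepr μ comul_comp_mul (ℛ k c)),
    comul_tmul z c (ℛ k z) (ℛ k c), map_sum]
  simp [mapRepr, map_sum]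

lemma counit_comp_lTensor_mul :
    counit (R := k) ∘ₗ LinearMap.lTensor H μ =
      counit (R := k) (A := H ⊗[k] (H ⊗[k] H)) := by
  apply TensorProduct.ext'
  intro z c
  have h := LinearMap.congr_fun (counit_comp_mul (k := k) (H := H)) c
  simp only [LinearMap.comp_apply] at h
  simp [counit_tmul, h]

lemma comul_comp_assoc :
    comul (R := k) ∘ₗ (TensorProduct.assoc k H H H).toLinearMap =
      TensorProduct.map (TensorProduct.assoc k H H H).toLinearMap
        (TensorProduct.assoc k H H H).toLinearMap ∘ₗ comul := by
  exact ((Coalgebra.TensorProduct.assoc k k H H H).toCoalgHom.map_comp_comul).symm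

lemma counit_comp_assoc :
    counit (R := k) ∘ₗ (TensorProduct.assoc k H H H).toLinearMap = counit := by
  exact (Coalgebra.TensorProduct.assoc k k H H H).toCoalgHom.counit_comp

lemma convUnit_eq_counit {C : Type u} [AddCommGroup C] [Module k C] [Coalgebra k C] :
    (convUnit : C →ₗ[k] k) = counit := by
  ext c
  simp [convUnit]

lemma mul_assoc₃ : μ ∘ₗ LinearMap.rTensor H μ =
    (μ ∘ₗ LinearMap.lTensor H μ) ∘ₗ (TensorProduct.assoc k H H H).toLinearMap := by
  apply TensorProduct.ext_threefold
  intro x y z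
  simp [mul_assoc]

/-- Translation of the left-hand side of the 2-cocycle hypothesis. -/
lemma hcoc_lhs_eq (σ : H ⊗[k] H →ₗ[k] k) :
    (LinearMap.mul' k k ∘ₗ
        TensorProduct.map σ (σ ∘ₗ LinearMap.rTensor H (LinearMap.mul' k H)) ∘ₗ
        (TensorProduct.assoc k (H ⊗[k] H) (H ⊗[k] H) H).toLinearMap ∘ₗ
        LinearMap.rTensor H (comul (R := k) (A := H ⊗[k] H))) =
      conv (σ ∘ₗ pL) (σ ∘ₗ LinearMap.rTensor H μ) := by
  apply TensorProduct.ext'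
  intro c z
  set rc := ℛ k c
  set rz := ℛ k z
  rw [conv_tmul _ _ c z rc rz]
  calc (LinearMap.mul' k k ∘ₗ
        TensorProduct.map σ (σ ∘ₗ LinearMap.rTensor H (LinearMap.mul' k H)) ∘ₗ
        (TensorProduct.assoc k (H ⊗[k] H) (H ⊗[k] H) H).toLinearMap ∘ₗ
        LinearMap.rTensor H (comul (R := k) (A := H ⊗[k] H))) (c ⊗ₜ[k] z)
      = ∑ i ∈ rc.index, σ (rc.left i) * σ (μ (rc.right i) ⊗ₜ[k] z) := by
        simp only [LinearMap.comp_apply, LinearMap.rTensor_tmul, ← rc.eq,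
          TensorProduct.sum_tmul, map_sum]
        simp
    _ = ∑ i ∈ rc.index, ∑ j ∈ rz.index,
          (σ ∘ₗ pL) (rc.left i ⊗ₜ[k] rz.left j) *
            (σ ∘ₗ LinearMap.rTensor H μ) (rc.right i ⊗ₜ[k] rz.right j) := by
        refine Finset.sum_congr rfl fun i _ => ?_
        have : ∀ j ∈ rz.index,
            (σ ∘ₗ pL) (rc.left i ⊗ₜ[k] rz.left j) *
              (σ ∘ₗ LinearMap.rTensor H μ) (rc.right i ⊗ₜ[k] rz.right j)
            = σ (rc.left i) * (counit (R := k) (rz.left j) •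
                σ (μ (rc.right i) ⊗ₜ[k] rz.right j)) := by
          intro j _
          simp only [LinearMap.comp_apply, pL_tmul, map_smul, LinearMap.rTensor_tmul,
            smul_eq_mul]
          ring
        rw [Finset.sum_congr rfl this, ← Finset.mul_sum]
        congr 1
        have h := sum_counit_smul_apply (σ ∘ₗ TensorProduct.mk k H H (μ (rc.right i))) rz
        simp only [LinearMap.comp_apply, TensorProduct.mk_apply] at h
        exact h.symm

/-- Translation of the right-hand side of the 2-cocycle hypothesis. -/
lemma hcoc_rhs_eq (σ : H ⊗[k] H →ₗ[k] k) :
    (LinearMap.mul' k k ∘ₗ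
        TensorProduct.map σ (σ ∘ₗ LinearMap.lTensor H (LinearMap.mul' k H)) ∘ₗ
        (TensorProduct.assoc k (H ⊗[k] H) H (H ⊗[k] H)).toLinearMap ∘ₗ
        LinearMap.rTensor (H ⊗[k] H) (TensorProduct.comm k H (H ⊗[k] H)).toLinearMap ∘ₗ
        (TensorProduct.assoc k H (H ⊗[k] H) (H ⊗[k] H)).symm.toLinearMap ∘ₗ
        LinearMap.lTensor H (comul (R := k) (A := H ⊗[k] H)) ∘ₗ
        (TensorProduct.assoc k H H H).toLinearMap) =
      conv (σ ∘ₗ pR) (σ ∘ₗ LinearMap.lTensor H μ) ∘ₗ (TensorProduct.assoc k H H H).toLinearMap := by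
  set G := LinearMap.mul' k k ∘ₗ
        TensorProduct.map σ (σ ∘ₗ LinearMap.lTensor H (LinearMap.mul' k H)) ∘ₗ
        (TensorProduct.assoc k (H ⊗[k] H) H (H ⊗[k] H)).toLinearMap ∘ₗ
        LinearMap.rTensor (H ⊗[k] H) (TensorProduct.comm k H (H ⊗[k] H)).toLinearMap ∘ₗ
        (TensorProduct.assoc k H (H ⊗[k] H) (H ⊗[k] H)).symm.toLinearMap ∘ₗ
        LinearMap.lTensor H (comul (R := k) (A := H ⊗[k] H)) with hG
  have key : G = conv (σ ∘ₗ pR) (σ ∘ₗ LinearMap.lTensor H μ) := by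
    apply TensorProduct.ext'
    intro x d
    set rx := ℛ k x
    set rd := ℛ k d
    rw [conv_tmul _ _ x d rx rd]
    calc G (x ⊗ₜ[k] d)
        = ∑ j ∈ rd.index, σ (rd.left j) * σ (x ⊗ₜ[k] μ (rd.right j)) := by
          rw [hG]
          simp only [LinearMap.comp_apply, LinearMap.lTensor_tmul, ← rd.eq,
            TensorProduct.tmul_sum, map_sum]
          simp
      _ = ∑ i ∈ rx.index, ∑ j ∈ rd.index,
            (σ ∘ₗ pR) (rx.left i ⊗ₜ[k] rd.left j) *
              (σ ∘ₗ LinearMap.lTensor H μ) (rx.right i ⊗ₜ[k] rd.right j) := by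
          rw [Finset.sum_comm]
          refine Finset.sum_congr rfl fun j _ => ?_
          have : ∀ i ∈ rx.index,
              (σ ∘ₗ pR) (rx.left i ⊗ₜ[k] rd.left j) *
                (σ ∘ₗ LinearMap.lTensor H μ) (rx.right i ⊗ₜ[k] rd.right j)
              = σ (rd.left j) * (counit (R := k) (rx.left i) •
                  σ (rx.right i ⊗ₜ[k] μ (rd.right j))) := by
            intro i _
            simp only [LinearMap.comp_apply, pR_tmul, map_smul, LinearMap.lTensor_tmul,
              smul_eq_mul]
            ring
          rw [Finset.sum_congr rfl this, ← Finset.mul_sum]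
          congr 1
          have h := sum_counit_smul_apply
            (σ ∘ₗ (TensorProduct.mk k H H).flip (μ (rd.right j))) rx
          simp only [LinearMap.comp_apply, LinearMap.flip_apply, TensorProduct.mk_apply] at h
          exact h.symm
  rw [← key, hG]
  simp only [LinearMap.comp_assoc]


section Normalized

variable (σ σinv : H ⊗[k] H →ₗ[k] k)
variable (hcocConv : conv (σ ∘ₗ pL) (σ ∘ₗ LinearMap.rTensor H (LinearMap.mul' k H)) =
    conv (σ ∘ₗ pR) (σ ∘ₗ LinearMap.lTensor H (LinearMap.mul' k H)) ∘ₗ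
      (TensorProduct.assoc k H H H).toLinearMap)
variable (hinv₁ : conv σ σinv = counit (R := k) (A := H ⊗[k] H))
variable (hinv₂ : conv σinv σ = counit (R := k) (A := H ⊗[k] H))
variable (hnorm : σ ((1 : H) ⊗ₜ[k] (1 : H)) = 1)

include hinv₁ hinv₂ in
lemma conv_sigma_inclR_sigmainv_inclR :
    conv (σ ∘ₗ TensorProduct.mk k H H 1) (σinv ∘ₗ TensorProduct.mk k H H 1) = convUnit ∧
    conv (σinv ∘ₗ TensorProduct.mk k H H 1) (σ ∘ₗ TensorProduct.mk k H H 1) = convUnit := by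
  constructor
  · rw [← conv_comp _ _ _ comul_comp_inclR, hinv₁, counit_comp_inclR, convUnit_eq_counit]
  · rw [← conv_comp _ _ _ comul_comp_inclR, hinv₂, counit_comp_inclR, convUnit_eq_counit]

include hinv₁ hinv₂ in
lemma conv_sigma_inclL_sigmainv_inclL :
    conv (σ ∘ₗ (TensorProduct.mk k H H).flip 1) (σinv ∘ₗ (TensorProduct.mk k H H).flip 1)
      = convUnit ∧
    conv (σinv ∘ₗ (TensorProduct.mk k H H).flip 1) (σ ∘ₗ (TensorProduct.mk k H H).flip 1)
      = convUnit := by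
  constructor
  · rw [← conv_comp _ _ _ comul_comp_inclL, hinv₁, counit_comp_inclL, convUnit_eq_counit]
  · rw [← conv_comp _ _ _ comul_comp_inclL, hinv₂, counit_comp_inclL, convUnit_eq_counit]

include hcocConv hinv₁ hinv₂ hnorm in
lemma sigma_comp_inclR : σ ∘ₗ TensorProduct.mk k H H 1 = counit := by
  set τ := σ ∘ₗ TensorProduct.mk k H H 1 with hτ
  set τinv := σinv ∘ₗ TensorProduct.mk k H H 1 with hτinv
  set j : H →ₗ[k] (H ⊗[k] H) ⊗[k] H := TensorProduct.mk k (H ⊗[k] H) H 1 with hj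
  have e1 : conv (σ ∘ₗ pL) (σ ∘ₗ LinearMap.rTensor H μ) ∘ₗ j =
      conv ((σ ∘ₗ pL) ∘ₗ j) ((σ ∘ₗ LinearMap.rTensor H μ) ∘ₗ j) :=
    conv_comp _ _ j comul_comp_inclR
  have e2 : (σ ∘ₗ pL) ∘ₗ j = counit := by
    ext z
    simp [hj, Algebra.TensorProduct.one_def, hnorm]
  have e3 : (σ ∘ₗ LinearMap.rTensor H μ) ∘ₗ j = τ := by
    ext z
    simp [hj, hτ, Algebra.TensorProduct.one_def]
  have e4 : (TensorProduct.assoc k H H H).toLinearMap ∘ₗ j =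
      TensorProduct.mk k H (H ⊗[k] H) 1 ∘ₗ TensorProduct.mk k H H 1 := by
    ext z
    simp [hj, Algebra.TensorProduct.one_def]
  have e5 : conv (σ ∘ₗ pR) (σ ∘ₗ LinearMap.lTensor H μ) ∘ₗ
      (TensorProduct.mk k H (H ⊗[k] H) 1 ∘ₗ TensorProduct.mk k H H 1) = conv τ τ := by
    rw [← LinearMap.comp_assoc, conv_comp _ _ _ comul_comp_inclR,
      conv_comp _ _ _ comul_comp_inclR]
    congr 1
    · ext z
      simp [hτ]
    · ext z
      simp [hτ, Algebra.TensorProduct.one_def]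
  have key : τ = conv τ τ := by
    have h := congrArg (fun F => F ∘ₗ j) hcocConv
    rw [e1, e2, e3, LinearMap.comp_assoc, e4, e5, ← convUnit_eq_counit, conv_unit_left] at h
    exact h
  have i1 := (conv_sigma_inclR_sigmainv_inclR σ σinv hinv₁ hinv₂).1
  rw [← hτ, ← hτinv] at i1
  calc τ = conv τ convUnit := (conv_unit_right τ).symm
    _ = conv τ (conv τ τinv) := by rw [i1]
    _ = conv (conv τ τ) τinv := (conv_assoc τ τ τinv).symm
    _ = conv τ τinv := by rw [← key]
    _ = convUnit := i1
    _ = counit := convUnit_eq_counit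

include hcocConv hinv₁ hinv₂ hnorm in
lemma sigma_comp_inclL : σ ∘ₗ (TensorProduct.mk k H H).flip 1 = counit := by
  set τ := σ ∘ₗ (TensorProduct.mk k H H).flip 1 with hτ
  set τinv := σinv ∘ₗ (TensorProduct.mk k H H).flip 1 with hτinv
  set j : H →ₗ[k] (H ⊗[k] H) ⊗[k] H :=
    (TensorProduct.mk k (H ⊗[k] H) H).flip 1 ∘ₗ (TensorProduct.mk k H H).flip 1 with hj
  have hj2 : comul (R := k) ∘ₗ j = TensorProduct.map j j ∘ₗ comul := by
    rw [hj, ← LinearMap.comp_assoc, comul_comp_inclL, LinearMap.comp_assoc,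
      comul_comp_inclL, ← LinearMap.comp_assoc, ← TensorProduct.map_comp]
  have e1 : conv (σ ∘ₗ pL) (σ ∘ₗ LinearMap.rTensor H μ) ∘ₗ j =
      conv ((σ ∘ₗ pL) ∘ₗ j) ((σ ∘ₗ LinearMap.rTensor H μ) ∘ₗ j) :=
    conv_comp _ _ j hj2
  have e2 : (σ ∘ₗ pL) ∘ₗ j = τ := by
    ext x
    simp [hj, hτ]
  have e3 : (σ ∘ₗ LinearMap.rTensor H μ) ∘ₗ j = τ := by
    ext x
    simp [hj, hτ]
  have e4 : (TensorProduct.assoc k H H H).toLinearMap ∘ₗ j =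
      (TensorProduct.mk k H (H ⊗[k] H)).flip 1 := by
    ext x
    simp [hj, Algebra.TensorProduct.one_def]
  have e5 : conv (σ ∘ₗ pR) (σ ∘ₗ LinearMap.lTensor H μ) ∘ₗ
      (TensorProduct.mk k H (H ⊗[k] H)).flip 1 = conv counit τ := by
    rw [conv_comp _ _ _ comul_comp_inclL]
    congr 1
    · ext x
      simp [Algebra.TensorProduct.one_def, hnorm]
    · ext x
      simp [hτ, Algebra.TensorProduct.one_def]
  have key2 : conv τ τ = τ := by
    have h := congrArg (fun F => F ∘ₗ j) hcocConv
    rw [e1, e2, e3, LinearMap.comp_assoc, e4, e5] at h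
    rw [h, ← convUnit_eq_counit, conv_unit_left]
  have i1 := (conv_sigma_inclL_sigmainv_inclL σ σinv hinv₁ hinv₂).1
  rw [← hτ, ← hτinv] at i1
  calc τ = conv τ convUnit := (conv_unit_right τ).symm
    _ = conv τ (conv τ τinv) := by rw [i1]
    _ = conv (conv τ τ) τinv := (conv_assoc τ τ τinv).symm
    _ = conv τ τinv := by rw [key2]
    _ = convUnit := i1
    _ = counit := convUnit_eq_counit

include hcocConv hinv₁ hinv₂ hnorm in
lemma sigmainv_comp_inclR : σinv ∘ₗ TensorProduct.mk k H H 1 = counit := by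
  have i1 := (conv_sigma_inclR_sigmainv_inclR σ σinv hinv₁ hinv₂).1
  rw [sigma_comp_inclR σ σinv hcocConv hinv₁ hinv₂ hnorm, ← convUnit_eq_counit,
    conv_unit_left] at i1
  rw [i1, convUnit_eq_counit]

include hcocConv hinv₁ hinv₂ hnorm in
lemma sigmainv_comp_inclL : σinv ∘ₗ (TensorProduct.mk k H H).flip 1 = counit := by
  have i1 := (conv_sigma_inclL_sigmainv_inclL σ σinv hinv₁ hinv₂).1
  rw [sigma_comp_inclL σ σinv hcocConv hinv₁ hinv₂ hnorm, ← convUnit_eq_counit,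
    conv_unit_left] at i1
  rw [i1, convUnit_eq_counit]

include hcocConv hinv₁ hinv₂ hnorm in
lemma twMul_comp_inclR : twMul σ σinv ∘ₗ TensorProduct.mk k H H 1 = LinearMap.id := by
  rw [twMul, conv_comp _ _ _ comul_comp_inclR, conv_comp _ _ _ comul_comp_inclR,
    LinearMap.comp_assoc, LinearMap.comp_assoc,
    sigma_comp_inclR σ σinv hcocConv hinv₁ hinv₂ hnorm,
    sigmainv_comp_inclR σ σinv hcocConv hinv₁ hinv₂ hnorm]
  have hu : Algebra.linearMap k H ∘ₗ counit (R := k) (A := H) = convUnit := rfl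
  rw [hu, conv_unit_left, conv_unit_right]
  ext x
  simp

include hcocConv hinv₁ hinv₂ hnorm in
lemma twMul_comp_inclL :
    twMul σ σinv ∘ₗ (TensorProduct.mk k H H).flip 1 = LinearMap.id := by
  rw [twMul, conv_comp _ _ _ comul_comp_inclL, conv_comp _ _ _ comul_comp_inclL,
    LinearMap.comp_assoc, LinearMap.comp_assoc,
    sigma_comp_inclL σ σinv hcocConv hinv₁ hinv₂ hnorm,
    sigmainv_comp_inclL σ σinv hcocConv hinv₁ hinv₂ hnorm]
  have hu : Algebra.linearMap k H ∘ₗ counit (R := k) (A := H) = convUnit := rfl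
  rw [hu, conv_unit_left, conv_unit_right]
  ext x
  simp


include hcocConv hinv₁ hinv₂ in
lemma twMul_assoc :
    twMul σ σinv ∘ₗ LinearMap.rTensor H (twMul σ σinv) =
      twMul σ σinv ∘ₗ LinearMap.lTensor H (twMul σ σinv) ∘ₗ
        (TensorProduct.assoc k H H H).toLinearMap := by
  have l1 : twMul σ σinv ∘ₗ LinearMap.rTensor H (twMul σ σinv) =
      conv (Algebra.linearMap k H ∘ₗ (σ ∘ₗ pL))
        (conv (conv (Algebra.linearMap k H ∘ₗ (σ ∘ₗ LinearMap.rTensor H (LinearMap.mul' k H)))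
          (conv (LinearMap.mul' k H ∘ₗ LinearMap.rTensor H (LinearMap.mul' k H))
            (Algebra.linearMap k H ∘ₗ (σinv ∘ₗ LinearMap.rTensor H (LinearMap.mul' k H)))))
          (Algebra.linearMap k H ∘ₗ (σinv ∘ₗ pL))) := by
    rw [twMul,
      rTensor_conv_scalar_left _ σ (conv (LinearMap.mul' k H) (Algebra.linearMap k H ∘ₗ σinv)),
      rTensor_conv_scalar_right _ σinv (LinearMap.mul' k H),
      conv_comp _ _ _ comul_comp_rTensor_mul, conv_comp _ _ _ comul_comp_rTensor_mul]
    simp only [LinearMap.comp_assoc]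
  have l2 : twMul σ σinv ∘ₗ LinearMap.rTensor H (twMul σ σinv) =
      conv (Algebra.linearMap k H ∘ₗ
          conv (σ ∘ₗ pL) (σ ∘ₗ LinearMap.rTensor H (LinearMap.mul' k H)))
        (conv (LinearMap.mul' k H ∘ₗ LinearMap.rTensor H (LinearMap.mul' k H))
          (Algebra.linearMap k H ∘ₗ
            conv (σinv ∘ₗ LinearMap.rTensor H (LinearMap.mul' k H)) (σinv ∘ₗ pL))) := by
    rw [l1,
      conv_assoc (Algebra.linearMap k H ∘ₗ (σ ∘ₗ LinearMap.rTensor H (LinearMap.mul' k H))),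
      conv_assoc (LinearMap.mul' k H ∘ₗ LinearMap.rTensor H (LinearMap.mul' k H)),
      ← conv_assoc (Algebra.linearMap k H ∘ₗ (σ ∘ₗ pL)),
      conv_algebraMap, conv_algebraMap]
  have r1 : twMul σ σinv ∘ₗ LinearMap.lTensor H (twMul σ σinv) =
      conv (Algebra.linearMap k H ∘ₗ (σ ∘ₗ pR))
        (conv (conv (Algebra.linearMap k H ∘ₗ (σ ∘ₗ LinearMap.lTensor H (LinearMap.mul' k H)))
          (conv (LinearMap.mul' k H ∘ₗ LinearMap.lTensor H (LinearMap.mul' k H))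
            (Algebra.linearMap k H ∘ₗ (σinv ∘ₗ LinearMap.lTensor H (LinearMap.mul' k H)))))
          (Algebra.linearMap k H ∘ₗ (σinv ∘ₗ pR))) := by
    rw [twMul,
      lTensor_conv_scalar_left _ σ (conv (LinearMap.mul' k H) (Algebra.linearMap k H ∘ₗ σinv)),
      lTensor_conv_scalar_right _ σinv (LinearMap.mul' k H),
      conv_comp _ _ _ comul_comp_lTensor_mul, conv_comp _ _ _ comul_comp_lTensor_mul]
    simp only [LinearMap.comp_assoc]
  have r2 : twMul σ σinv ∘ₗ LinearMap.lTensor H (twMul σ σinv) =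
      conv (Algebra.linearMap k H ∘ₗ
          conv (σ ∘ₗ pR) (σ ∘ₗ LinearMap.lTensor H (LinearMap.mul' k H)))
        (conv (LinearMap.mul' k H ∘ₗ LinearMap.lTensor H (LinearMap.mul' k H))
          (Algebra.linearMap k H ∘ₗ
            conv (σinv ∘ₗ LinearMap.lTensor H (LinearMap.mul' k H)) (σinv ∘ₗ pR))) := by
    rw [r1,
      conv_assoc (Algebra.linearMap k H ∘ₗ (σ ∘ₗ LinearMap.lTensor H (LinearMap.mul' k H))),
      conv_assoc (LinearMap.mul' k H ∘ₗ LinearMap.lTensor H (LinearMap.mul' k H)),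
      ← conv_assoc (Algebra.linearMap k H ∘ₗ (σ ∘ₗ pR)),
      conv_algebraMap, conv_algebraMap]
  have tinv : conv (σinv ∘ₗ LinearMap.rTensor H (LinearMap.mul' k H)) (σinv ∘ₗ pL) =
      conv (σinv ∘ₗ LinearMap.lTensor H (LinearMap.mul' k H)) (σinv ∘ₗ pR) ∘ₗ
        (TensorProduct.assoc k H H H).toLinearMap := by
    have ha : conv (σ ∘ₗ pL (C := H ⊗[k] H) (D := H))
        (σinv ∘ₗ pL (C := H ⊗[k] H) (D := H)) = convUnit := by
      rw [← conv_comp _ _ _ (comul_comp_pL (C := H ⊗[k] H) (D := H)), hinv₁,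
        counit_comp_pL, convUnit_eq_counit]
    have hb : conv (σ ∘ₗ LinearMap.rTensor H (LinearMap.mul' k H))
        (σinv ∘ₗ LinearMap.rTensor H (LinearMap.mul' k H)) = convUnit := by
      rw [← conv_comp _ _ _ comul_comp_rTensor_mul, hinv₁, counit_comp_rTensor_mul,
        convUnit_eq_counit]
    have ha' : conv (σinv ∘ₗ pR (C := H) (D := H ⊗[k] H))
        (σ ∘ₗ pR (C := H) (D := H ⊗[k] H)) = convUnit := by
      rw [← conv_comp _ _ _ (comul_comp_pR (C := H) (D := H ⊗[k] H)), hinv₂,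
        counit_comp_pR, convUnit_eq_counit]
    have hb' : conv (σinv ∘ₗ LinearMap.lTensor H (LinearMap.mul' k H))
        (σ ∘ₗ LinearMap.lTensor H (LinearMap.mul' k H)) = convUnit := by
      rw [← conv_comp _ _ _ comul_comp_lTensor_mul, hinv₂, counit_comp_lTensor_mul,
        convUnit_eq_counit]
    refine conv_inv_unique (x := conv (σ ∘ₗ pL)
      (σ ∘ₗ LinearMap.rTensor H (LinearMap.mul' k H))) ?_ ?_
    · exact conv_mul_inv ha hb
    · rw [hcocConv,
        ← conv_comp (conv (σinv ∘ₗ LinearMap.lTensor H (LinearMap.mul' k H)) (σinv ∘ₗ pR))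
          (conv (σ ∘ₗ pR) (σ ∘ₗ LinearMap.lTensor H (LinearMap.mul' k H))) _ comul_comp_assoc,
        conv_inv_mul ha' hb', unit_comp _ counit_comp_assoc]
  rw [l2, ← LinearMap.comp_assoc, r2,
    conv_comp (Algebra.linearMap k H ∘ₗ
        conv (σ ∘ₗ pR) (σ ∘ₗ LinearMap.lTensor H (LinearMap.mul' k H)))
      (conv (LinearMap.mul' k H ∘ₗ LinearMap.lTensor H (LinearMap.mul' k H))
        (Algebra.linearMap k H ∘ₗ
          conv (σinv ∘ₗ LinearMap.lTensor H (LinearMap.mul' k H)) (σinv ∘ₗ pR)))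
      _ comul_comp_assoc,
    conv_comp (LinearMap.mul' k H ∘ₗ LinearMap.lTensor H (LinearMap.mul' k H))
      (Algebra.linearMap k H ∘ₗ
        conv (σinv ∘ₗ LinearMap.lTensor H (LinearMap.mul' k H)) (σinv ∘ₗ pR))
      _ comul_comp_assoc,
    LinearMap.comp_assoc (TensorProduct.assoc k H H H).toLinearMap
      (conv (σ ∘ₗ pR) (σ ∘ₗ LinearMap.lTensor H (LinearMap.mul' k H)))
      (Algebra.linearMap k H),
    LinearMap.comp_assoc (TensorProduct.assoc k H H H).toLinearMap
      (conv (σinv ∘ₗ LinearMap.lTensor H (LinearMap.mul' k H)) (σinv ∘ₗ pR))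
      (Algebra.linearMap k H),
    ← hcocConv, ← tinv, ← mul_assoc₃]

end Normalized

end Hopf2
end DoiTwist

/-- Doi twist: for a convolution-invertible normalized 2-cocycle `σ` on a Hopf
algebra `H`, the twisted multiplication `x ·_σ y = σ(x₁ ⊗ y₁) x₂y₂ σ⁻¹(x₃ ⊗ y₃)`
(encoded as the linear map `Mσ : H ⊗ H → H` below) is associative with unit `1`,
and the coproduct and counit of `H` are multiplicative for it; thus
`(H, ·_σ, Δ, ε)` is a bialgebra. -/
theorem doi_twist_is_bialgebra {k : Type u} [Field k] {H : Type u}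
    [Ring H] [HopfAlgebra k H]
    (σ σinv : H ⊗[k] H →ₗ[k] k)
    (hcoc :
      (LinearMap.mul' k k ∘ₗ
        TensorProduct.map σ (σ ∘ₗ LinearMap.rTensor H (LinearMap.mul' k H)) ∘ₗ
        (TensorProduct.assoc k (H ⊗[k] H) (H ⊗[k] H) H).toLinearMap ∘ₗ
        LinearMap.rTensor H (comul (R := k) (A := H ⊗[k] H))) =
      (LinearMap.mul' k k ∘ₗ
        TensorProduct.map σ (σ ∘ₗ LinearMap.lTensor H (LinearMap.mul' k H)) ∘ₗ
        (TensorProduct.assoc k (H ⊗[k] H) H (H ⊗[k] H)).toLinearMap ∘ₗ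
        LinearMap.rTensor (H ⊗[k] H) (TensorProduct.comm k H (H ⊗[k] H)).toLinearMap ∘ₗ
        (TensorProduct.assoc k H (H ⊗[k] H) (H ⊗[k] H)).symm.toLinearMap ∘ₗ
        LinearMap.lTensor H (comul (R := k) (A := H ⊗[k] H)) ∘ₗ
        (TensorProduct.assoc k H H H).toLinearMap))
    (hinv₁ : LinearMap.mul' k k ∘ₗ TensorProduct.map σ σinv ∘ₗ
        comul (R := k) (A := H ⊗[k] H) = counit (R := k) (A := H ⊗[k] H))
    (hinv₂ : LinearMap.mul' k k ∘ₗ TensorProduct.map σinv σ ∘ₗ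
        comul (R := k) (A := H ⊗[k] H) = counit (R := k) (A := H ⊗[k] H))
    (hnorm : σ ((1 : H) ⊗ₜ[k] (1 : H)) = 1) :
    letI Mσ : H ⊗[k] H →ₗ[k] H :=
      (TensorProduct.lid k H).toLinearMap ∘ₗ
        TensorProduct.map σ
          ((TensorProduct.rid k H).toLinearMap ∘ₗ
            TensorProduct.map (LinearMap.mul' k H) σinv) ∘ₗ
        LinearMap.lTensor (H ⊗[k] H) (comul (R := k) (A := H ⊗[k] H)) ∘ₗ
        comul (R := k) (A := H ⊗[k] H)
    -- associativity
    (Mσ ∘ₗ LinearMap.rTensor H Mσ =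
        Mσ ∘ₗ LinearMap.lTensor H Mσ ∘ₗ (TensorProduct.assoc k H H H).toLinearMap) ∧
    -- unitality
    (∀ x : H, Mσ ((1 : H) ⊗ₜ[k] x) = x ∧ Mσ (x ⊗ₜ[k] (1 : H)) = x) ∧
    -- the coproduct is multiplicative for the twisted product
    (comul (R := k) (A := H) ∘ₗ Mσ =
        TensorProduct.map Mσ Mσ ∘ₗ comul (R := k) (A := H ⊗[k] H)) ∧
    -- the counit is multiplicative for the twisted product
    (counit (R := k) (A := H) ∘ₗ Mσ = counit (R := k) (A := H ⊗[k] H)) := by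
  classical
  have hcocC : DoiTwist.conv (σ ∘ₗ DoiTwist.pL)
      (σ ∘ₗ LinearMap.rTensor H (LinearMap.mul' k H)) =
      DoiTwist.conv (σ ∘ₗ DoiTwist.pR) (σ ∘ₗ LinearMap.lTensor H (LinearMap.mul' k H)) ∘ₗ
        (TensorProduct.assoc k H H H).toLinearMap :=
    (DoiTwist.hcoc_lhs_eq σ).symm.trans (hcoc.trans (DoiTwist.hcoc_rhs_eq σ))
  have h1 : DoiTwist.conv σ σinv = counit (R := k) (A := H ⊗[k] H) := hinv₁
  have h2 : DoiTwist.conv σinv σ = counit (R := k) (A := H ⊗[k] H) := hinv₂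
  refine ⟨?_, ?_, ?_, ?_⟩
  · rw [DoiTwist.twMul_eq σ σinv]
    exact DoiTwist.twMul_assoc σ σinv hcocC h1 h2
  · intro x
    rw [DoiTwist.twMul_eq σ σinv]
    constructor
    · have h := LinearMap.congr_fun
        (DoiTwist.twMul_comp_inclR σ σinv hcocC h1 h2 hnorm) x
      simpa using h
    · have h := LinearMap.congr_fun
        (DoiTwist.twMul_comp_inclL σ σinv hcocC h1 h2 hnorm) x
      simpa using h
  · rw [DoiTwist.twMul_eq σ σinv]
    exact DoiTwist.comul_comp_twMul σ σinv h2
  · rw [DoiTwist.twMul_eq σ σinv]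
    exact DoiTwist.counit_comp_twMul σ σinv h1
end

section
/- Let d ∈ ℕ and let q, q' be twist-equivalent rack 2-cocycles on a conjugacy class X of a finite group G (via a normalized group 2-cocycle σ on G). For each n, let Q_n and Q'_n be the quantum symmetrizers on (kX)^{⊗n} associated with the braidings c_q and c_{q'}, namely Q_n = Σ_{w ∈ S_n} ρ_n(M_n(w)) where M_n is the Matsumoto section and ρ_n the braid group action. Then for every n ≥ 2, dim ker Q_n = dim ker Q'_n. -/
open Finsupp

/-- product of cocycle values along a list: `σ(a₁, a₂⋯aₙ) σ(a₂, a₃⋯aₙ) ⋯`. -/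
def QSaux.cProd {G : Type*} [Group G] {k : Type*} [Field k] (σ : G → G → kˣ) : List G → kˣ
  | [] => 1
  | a :: t => σ a t.prod * QSaux.cProd σ t

lemma QSaux.cProd_swap {G : Type*} [Group G] {k : Type*} [Field k] (σ : G → G → kˣ)
    (hσ : ∀ a b c : G, σ a b * σ (a * b) c = σ b c * σ a (b * c))
    (a b : G) (l₁ l₂ : List G) :
    QSaux.cProd σ (l₁ ++ a :: b :: l₂) * σ (a * b * a⁻¹) a
      = QSaux.cProd σ (l₁ ++ (a * b * a⁻¹) :: a :: l₂) * σ a b := by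
  induction l₁ with
  | nil =>
    simp only [List.nil_append, QSaux.cProd, List.prod_cons]
    have h1 := congrArg Units.val (hσ a b l₂.prod)
    have h2 := congrArg Units.val (hσ (a * b * a⁻¹) a l₂.prod)
    rw [inv_mul_cancel_right] at h2
    ext
    push_cast at h1 h2 ⊢
    linear_combination (-((QSaux.cProd σ l₂ : k) * (σ (a*b*a⁻¹) a : k))) * h1
      + ((QSaux.cProd σ l₂ : k) * (σ a b : k)) * h2
  | cons h t ih =>
    have hp : (t ++ a :: b :: l₂).prod = (t ++ (a * b * a⁻¹) :: a :: l₂).prod := by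
      simp only [List.prod_append, List.prod_cons]
      group
    simp only [List.cons_append, QSaux.cProd, List.append_eq]
    rw [hp, mul_assoc (σ h _), mul_assoc (σ h _), ih]

lemma QSaux.ofFn_decomp {α : Type*} {m : ℕ} (x : Fin (m + 1) → α) (j : Fin m) :
    List.ofFn x = (List.ofFn x).take j ++
      x j.castSucc :: x j.succ :: (List.ofFn x).drop (j + 2) := by
  have hlen : (List.ofFn x).length = m + 1 := List.length_ofFn
  have h1 : (j : ℕ) < (List.ofFn x).length := by rw [hlen]; omega
  have h2 : (j : ℕ) + 1 < (List.ofFn x).length := by rw [hlen]; omega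
  conv_lhs => rw [← List.take_append_drop j (List.ofFn x)]
  rw [List.drop_eq_getElem_cons h1, List.drop_eq_getElem_cons h2,
    List.getElem_ofFn, List.getElem_ofFn]
  have e1 : x j.castSucc = x ⟨(j:ℕ), by omega⟩ := rfl
  have e2 : x j.succ = x ⟨(j:ℕ)+1, by omega⟩ := rfl
  rw [e1, e2]

lemma QSaux.ofFn_update_decomp {α : Type*} {m : ℕ} (x : Fin (m + 1) → α) (j : Fin m) (c : α) :
    List.ofFn (Function.update (Function.update x j.succ (x j.castSucc)) j.castSucc c)
      = (List.ofFn x).take j ++ c :: x j.castSucc :: (List.ofFn x).drop (j + 2) := by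
  set y := Function.update (Function.update x j.succ (x j.castSucc)) j.castSucc c with hy
  have hne : j.castSucc ≠ j.succ := (Fin.castSucc_lt_succ : j.castSucc < j.succ).ne
  have hyc : y j.castSucc = c := Function.update_self _ _ _
  have hys : y j.succ = x j.castSucc := by
    rw [hy, Function.update_of_ne hne.symm, Function.update_self]
  have htake : (List.ofFn y).take j = (List.ofFn x).take j := by
    apply List.ext_getElem
    · simp
    · intro i hi hi'
      have hij : i < (j : ℕ) := by simp at hi; omega
      have him : i < m + 1 := by omega
      rw [List.getElem_take, List.getElem_take, List.getElem_ofFn, List.getElem_ofFn]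
      have n1 : (⟨i, him⟩ : Fin (m+1)) ≠ j.castSucc := by
        intro h; apply absurd (congrArg Fin.val h); simp; omega
      have n2 : (⟨i, him⟩ : Fin (m+1)) ≠ j.succ := by
        intro h; apply absurd (congrArg Fin.val h); simp; omega
      show y ⟨i, him⟩ = x ⟨i, him⟩
      rw [hy, Function.update_of_ne n1, Function.update_of_ne n2]
  have hdrop : (List.ofFn y).drop ((j : ℕ) + 2) = (List.ofFn x).drop ((j : ℕ) + 2) := by
    apply List.ext_getElem
    · simp
    · intro i hi hi'
      have him : (j : ℕ) + 2 + i < m + 1 := by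
        have := hi; simp at this; omega
      rw [List.getElem_drop, List.getElem_drop, List.getElem_ofFn, List.getElem_ofFn]
      have n1 : (⟨(j:ℕ)+2+i, him⟩ : Fin (m+1)) ≠ j.castSucc := by
        intro h; apply absurd (congrArg Fin.val h); simp; omega
      have n2 : (⟨(j:ℕ)+2+i, him⟩ : Fin (m+1)) ≠ j.succ := by
        intro h; apply absurd (congrArg Fin.val h); simp; omega
      show y ⟨(j:ℕ)+2+i, him⟩ = x ⟨(j:ℕ)+2+i, him⟩
      rw [hy, Function.update_of_ne n1, Function.update_of_ne n2]
  calc List.ofFn y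
      = (List.ofFn y).take j ++ y j.castSucc :: y j.succ :: (List.ofFn y).drop (j + 2) :=
        QSaux.ofFn_decomp y j
    _ = (List.ofFn x).take j ++ c :: x j.castSucc :: (List.ofFn x).drop (j + 2) := by
        rw [htake, hdrop, hyc, hys]

/-- Corollary: quantum symmetrizers of twist-equivalent rack 2-cocycles on a
conjugacy class `X` of a finite group have kernels of the same dimension in
each tensor degree `n = m + 1 ≥ 2`.  The symmetrizer is `Q = Σ_{w ∈ S_n} ρ(M(w))`,
where `M` is the Matsumoto section (given by a choice of reduced word for each
permutation) and `ρ` the braid-generator action coming from the braiding `c_q`. -/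
theorem quantum_symmetrizer_kernels_twist_invariant {k : Type*} [Field k]
    {G : Type*} [Group G] [Fintype G] (X : Set G)
    (hXconj : ∃ a : G, X = {b : G | IsConj a b})
    (op : X → X → X)
    (hop : ∀ x y : X, (op x y : G) = (x : G) * y * (x : G)⁻¹)
    (q q' : X → X → kˣ) (σ : G → G → kˣ)
    (hσ : ∀ a b c : G, σ a b * σ (a * b) c = σ b c * σ a (b * c))
    (hσ1 : ∀ a : G, σ a 1 = 1 ∧ σ 1 a = 1)
    (hq : ∀ x y z : X, q x (op y z) * q y z = q (op x y) (op x z) * q x z)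
    (htwist : ∀ x y : X, q' x y = σ (x : G) (y : G) * q x y * (σ ((op x y : G)) (x : G))⁻¹)
    (m : ℕ) (hm : 1 ≤ m)
    -- a choice of reduced word for each permutation (the Matsumoto section)
    (word : Equiv.Perm (Fin (m + 1)) → List (Fin m))
    (hword : ∀ w : Equiv.Perm (Fin (m + 1)),
      ((word w).map (fun i => Equiv.swap i.castSucc i.succ)).prod = w)
    (hreduced : ∀ (w : Equiv.Perm (Fin (m + 1))) (l : List (Fin m)),
      (l.map (fun i => Equiv.swap i.castSucc i.succ)).prod = w →
        (word w).length ≤ l.length)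
    -- the braid generator actions associated with `c_q` and `c_{q'}`
    (ρ ρ' : Fin m → Module.End k ((Fin (m + 1) → X) →₀ k))
    (hρ : ∀ (j : Fin m) (x : Fin (m + 1) → X),
      ρ j (Finsupp.single x 1) =
        ((q (x j.castSucc) (x j.succ) : kˣ) : k) •
          Finsupp.single
            (Function.update (Function.update x j.succ (x j.castSucc)) j.castSucc
              (op (x j.castSucc) (x j.succ))) 1)
    (hρ' : ∀ (j : Fin m) (x : Fin (m + 1) → X),
      ρ' j (Finsupp.single x 1) =
        ((q' (x j.castSucc) (x j.succ) : kˣ) : k) •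
          Finsupp.single
            (Function.update (Function.update x j.succ (x j.castSucc)) j.castSucc
              (op (x j.castSucc) (x j.succ))) 1) :
    letI Q : Module.End k ((Fin (m + 1) → X) →₀ k) :=
      ∑ w : Equiv.Perm (Fin (m + 1)), ((word w).map ρ).prod
    letI Q' : Module.End k ((Fin (m + 1) → X) →₀ k) :=
      ∑ w : Equiv.Perm (Fin (m + 1)), ((word w).map ρ').prod
    Module.finrank k (LinearMap.ker Q) = Module.finrank k (LinearMap.ker Q') := by
  -- the diagonal coefficient
  let φ : (Fin (m + 1) → X) → kˣ :=
    fun x => (QSaux.cProd σ (List.ofFn fun i => ((x i : G))))⁻¹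
  -- the intertwiner and its inverse
  let F : ((Fin (m + 1) → X) →₀ k) →ₗ[k] ((Fin (m + 1) → X) →₀ k) :=
    Finsupp.lsum k fun x => ((φ x : k) • Finsupp.lsingle x)
  let Fi : ((Fin (m + 1) → X) →₀ k) →ₗ[k] ((Fin (m + 1) → X) →₀ k) :=
    Finsupp.lsum k fun x => ((((φ x)⁻¹ : kˣ) : k) • Finsupp.lsingle x)
  have hF : ∀ (x : Fin (m + 1) → X) (b : k),
      F (Finsupp.single x b) = (φ x : k) • Finsupp.single x b := by
    intro x b
    simp [F, Finsupp.smul_single]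
  have hFi : ∀ (x : Fin (m + 1) → X) (b : k),
      Fi (Finsupp.single x b) = (((φ x)⁻¹ : kˣ) : k) • Finsupp.single x b := by
    intro x b
    simp [Fi, Finsupp.smul_single]
  have hFFi : F ∘ₗ Fi = LinearMap.id := by
    apply Finsupp.lhom_ext
    intro x b
    rw [LinearMap.comp_apply, hFi, map_smul, hF, smul_smul]
    have : (((φ x)⁻¹ : kˣ) : k) * (φ x : k) = 1 := by
      rw [← Units.val_mul, inv_mul_cancel, Units.val_one]
    rw [this, one_smul, LinearMap.id_apply]
  have hFiF : Fi ∘ₗ F = LinearMap.id := by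
    apply Finsupp.lhom_ext
    intro x b
    rw [LinearMap.comp_apply, hF, map_smul, hFi, smul_smul]
    have : (φ x : k) * (((φ x)⁻¹ : kˣ) : k) = 1 := by
      rw [← Units.val_mul, mul_inv_cancel, Units.val_one]
    rw [this, one_smul, LinearMap.id_apply]
  let e : ((Fin (m + 1) → X) →₀ k) ≃ₗ[k] ((Fin (m + 1) → X) →₀ k) :=
    LinearEquiv.ofLinear F Fi hFFi hFiF
  -- the key scalar identity
  have hkey : ∀ (j : Fin m) (x : Fin (m + 1) → X),
      (φ x) * q' (x j.castSucc) (x j.succ)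
        = q (x j.castSucc) (x j.succ) *
          φ (Function.update (Function.update x j.succ (x j.castSucc)) j.castSucc
              (op (x j.castSucc) (x j.succ))) := by
    intro j x
    set a := x j.castSucc with ha
    set b := x j.succ with hb
    set Tx : Fin (m + 1) → X :=
      Function.update (Function.update x j.succ a) j.castSucc (op a b) with hTx
    have hco : (fun i => ((Tx i : G))) =
        Function.update (Function.update (fun i => ((x i : G))) j.succ (a : G)) j.castSucc
          ((op a b : G)) := by
      rw [hTx]
      rw [show (fun i => ((Function.update (Function.update x j.succ a) j.castSucc (op a b)) i : G))
          = (Subtype.val ∘ Function.update (Function.update x j.succ a) j.castSucc (op a b))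
          from rfl]
      rw [Function.comp_update, Function.comp_update]
      rfl
    have hofT : List.ofFn (fun i => ((Tx i : G))) =
        (List.ofFn fun i => ((x i : G))).take j ++ ((op a b : G)) :: (a : G) ::
          (List.ofFn fun i => ((x i : G))).drop (j + 2) := by
      rw [hco]
      exact QSaux.ofFn_update_decomp (fun i => ((x i : G))) j _
    have hofx : List.ofFn (fun i => ((x i : G))) =
        (List.ofFn fun i => ((x i : G))).take j ++ (a : G) :: (b : G) ::
          (List.ofFn fun i => ((x i : G))).drop (j + 2) :=
      QSaux.ofFn_decomp (fun i => ((x i : G))) j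
    have hswap := QSaux.cProd_swap σ hσ (a : G) (b : G)
      ((List.ofFn fun i => ((x i : G))).take j)
      ((List.ofFn fun i => ((x i : G))).drop (j + 2))
    rw [← hop a b] at hswap
    rw [← hofx, ← hofT] at hswap
    -- hswap : cProd(x) * σ(op a b) a = cProd(Tx) * σ a b
    have hB : QSaux.cProd σ (List.ofFn fun i => ((Tx i : G)))
        = QSaux.cProd σ (List.ofFn fun i => ((x i : G))) * σ ((op a b : G)) (a : G) *
            (σ (a : G) (b : G))⁻¹ := by
      rw [eq_mul_inv_iff_mul_eq]
      exact hswap.symm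
    show (QSaux.cProd σ (List.ofFn fun i => ((x i : G))))⁻¹ * q' a b
        = q a b * (QSaux.cProd σ (List.ofFn fun i => ((Tx i : G))))⁻¹
    rw [htwist a b, hB, mul_inv_rev, mul_inv_rev, inv_inv]
    ac_rfl
  -- generator intertwining
  have hgen : ∀ j : Fin m, ρ' j ∘ₗ F = F ∘ₗ ρ j := by
    intro j
    apply Finsupp.lhom_ext
    intro x b
    have hb : (Finsupp.single x b : (Fin (m + 1) → X) →₀ k) = b • Finsupp.single x 1 := by
      rw [Finsupp.smul_single, smul_eq_mul, mul_one]
    rw [LinearMap.comp_apply, LinearMap.comp_apply, hb, map_smul, map_smul, map_smul, map_smul]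
    congr 1
    rw [hF, map_smul, hρ' j x, hρ j x, map_smul, hF, smul_smul, smul_smul]
    have hk := congrArg Units.val (hkey j x)
    push_cast at hk
    rw [hk]
  -- word intertwining
  have hprod : ∀ l : List (Fin m), ((l.map ρ').prod) ∘ₗ F = F ∘ₗ ((l.map ρ).prod) := by
    intro l
    induction l with
    | nil => simp [Module.End.one_eq_id]
    | cons a t ih =>
      simp only [List.map_cons, List.prod_cons]
      calc (ρ' a * (t.map ρ').prod) ∘ₗ F
          = ρ' a ∘ₗ ((t.map ρ').prod ∘ₗ F) := by
            rw [Module.End.mul_eq_comp, LinearMap.comp_assoc]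
        _ = ρ' a ∘ₗ (F ∘ₗ (t.map ρ).prod) := by rw [ih]
        _ = (ρ' a ∘ₗ F) ∘ₗ (t.map ρ).prod := by rw [LinearMap.comp_assoc]
        _ = (F ∘ₗ ρ a) ∘ₗ (t.map ρ).prod := by rw [hgen a]
        _ = F ∘ₗ (ρ a * (t.map ρ).prod) := by
            rw [Module.End.mul_eq_comp, LinearMap.comp_assoc]
  -- symmetrizer intertwining
  show Module.finrank k
      (LinearMap.ker (∑ w : Equiv.Perm (Fin (m + 1)), ((word w).map ρ).prod))
    = Module.finrank k
      (LinearMap.ker (∑ w : Equiv.Perm (Fin (m + 1)), ((word w).map ρ').prod))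
  set Q : Module.End k ((Fin (m + 1) → X) →₀ k) :=
    ∑ w : Equiv.Perm (Fin (m + 1)), ((word w).map ρ).prod with hQdef
  set Q' : Module.End k ((Fin (m + 1) → X) →₀ k) :=
    ∑ w : Equiv.Perm (Fin (m + 1)), ((word w).map ρ').prod with hQ'def
  have hQ : Q' ∘ₗ F = F ∘ₗ Q := by
    show Q' * F = F * Q
    rw [hQdef, hQ'def, Finset.sum_mul, Finset.mul_sum]
    exact Finset.sum_congr rfl fun w _ => hprod (word w)
  have hkerF : LinearMap.ker F = ⊥ := by
    rw [LinearMap.ker_eq_bot]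
    intro u v huv
    have h := congrArg Fi huv
    rw [← LinearMap.comp_apply, ← LinearMap.comp_apply, hFiF] at h
    simpa using h
  have hker : LinearMap.ker Q = (LinearMap.ker Q').comap F := by
    rw [← LinearMap.ker_comp, hQ, LinearMap.ker_comp, hkerF]
    exact Submodule.comap_bot Q
  have heF : (e : ((Fin (m + 1) → X) →₀ k) →ₗ[k] ((Fin (m + 1) → X) →₀ k)) = F := rfl
  rw [hker, ← heF, Submodule.comap_equiv_eq_map_symm]
  exact LinearEquiv.finrank_map_eq e.symm (LinearMap.ker Q')
end

section
/- Let A = ⊕_{j≥0} A_j be a connected ℕ-graded bialgebra over k generated as an algebra by A_1, presented as T(A_1)/J for a graded biideal J ⊆ ⊕_{m≥2} A_1^{⊗m} of the tensor bialgebra T(A_1) (with A_1 primitive). For d ≥ 2, the ideal of T(A_1) generated by ⊕_{m=2}^d (J ∩ A_1^{⊗m}) is again a coideal of T(A_1), so the quotient T(A_1)/(⊕_{m=2}^d (J ∩ A_1^{⊗m})) is a connected graded bialgebra. -/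
set_option maxHeartbeats 1000000


open TensorProduct Coalgebra

private lemma datic_aux_rT {k T A B : Type*} [CommSemiring k] [AddCommMonoid T] [Module k T]
    [AddCommMonoid A] [Module k A] [AddCommMonoid B] [Module k B]
    (I : Submodule k T) (f : A →ₗ[k] T) (g : B →ₗ[k] T) (hf : LinearMap.range f ≤ I) :
    LinearMap.range (TensorProduct.map f g) ≤
      LinearMap.range (LinearMap.rTensor T I.subtype) := by
  have hfac : TensorProduct.map f g =
      (LinearMap.rTensor T I.subtype).comp
        (TensorProduct.map (f.codRestrict I fun x => hf ⟨x, rfl⟩) g) := by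
    rw [LinearMap.rTensor, ← TensorProduct.map_comp]
    congr 1
  rw [hfac, LinearMap.range_comp]
  exact LinearMap.map_le_range

private lemma datic_aux_lT {k T A B : Type*} [CommSemiring k] [AddCommMonoid T] [Module k T]
    [AddCommMonoid A] [Module k A] [AddCommMonoid B] [Module k B]
    (I : Submodule k T) (f : A →ₗ[k] T) (g : B →ₗ[k] T) (hg : LinearMap.range g ≤ I) :
    LinearMap.range (TensorProduct.map f g) ≤
      LinearMap.range (LinearMap.lTensor T I.subtype) := by
  have hfac : TensorProduct.map f g =
      (LinearMap.lTensor T I.subtype).comp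
        (TensorProduct.map f (g.codRestrict I fun x => hg ⟨x, rfl⟩)) := by
    rw [LinearMap.lTensor, ← TensorProduct.map_comp]
    congr 1
  rw [hfac, LinearMap.range_comp]
  exact LinearMap.map_le_range

/-- The d-atic cover construction: let `T` be a connected ℕ-graded bialgebra
generated in degree one with all degree-one elements primitive (e.g. the tensor
bialgebra `T(A₁)` of a presentation `A = T(A₁)/J`), and let `J` be a graded
two-sided ideal and coideal contained in degrees `≥ 2`.  Then for `d ≥ 2` the
two-sided ideal generated by `⊕_{m=2}^{d} (J ∩ Tₘ)` is again a coideal of `T`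
(so the corresponding quotient is a connected graded bialgebra). -/
theorem datic_cover_coideal {k T : Type*} [Field k] [Ring T] [Bialgebra k T]
    (𝒜 : ℕ → Submodule k T)
    (hinternal : DirectSum.IsInternal 𝒜)
    (hmul : ∀ i j : ℕ, ∀ a ∈ 𝒜 i, ∀ b ∈ 𝒜 j, a * b ∈ 𝒜 (i + j))
    (hcomul : ∀ n : ℕ, ∀ a ∈ 𝒜 n,
      comul (R := k) a ∈
        ⨆ (p : ℕ × ℕ) (_ : p.1 + p.2 = n),
          LinearMap.range (TensorProduct.map (𝒜 p.1).subtype (𝒜 p.2).subtype))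
    (hconn : 𝒜 0 = Submodule.span k {(1 : T)})
    (hgen : Algebra.adjoin k ((𝒜 1 : Submodule k T) : Set T) = ⊤)
    (hprim : ∀ a ∈ 𝒜 1, comul (R := k) a = a ⊗ₜ[k] (1 : T) + (1 : T) ⊗ₜ[k] a)
    (J : Submodule k T)
    (hJideal : ∀ a ∈ J, ∀ t : T, t * a ∈ J ∧ a * t ∈ J)
    (hJcoideal : ∀ a ∈ J, counit (R := k) a = 0 ∧
      comul (R := k) a ∈
        LinearMap.range (LinearMap.rTensor T J.subtype) ⊔
        LinearMap.range (LinearMap.lTensor T J.subtype))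
    (hJgraded : J = ⨆ m : ℕ, J ⊓ 𝒜 m)
    (hJdeg : J ≤ ⨆ (m : ℕ) (_ : 2 ≤ m), 𝒜 m)
    (d : ℕ) (hd : 2 ≤ d) :
    letI S : Submodule k T := ⨆ (m : ℕ) (_ : m ∈ Finset.Icc 2 d), (J ⊓ 𝒜 m)
    letI I : Submodule k T :=
      Submodule.span k {y : T | ∃ t ∈ S, ∃ a b : T, y = a * t * b}
    ∀ x ∈ I, counit (R := k) x = 0 ∧
      comul (R := k) x ∈
        LinearMap.range (LinearMap.rTensor T I.subtype) ⊔
        LinearMap.range (LinearMap.lTensor T I.subtype) := by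
  classical
  set S : Submodule k T := ⨆ (m : ℕ) (_ : m ∈ Finset.Icc 2 d), (J ⊓ 𝒜 m) with hS
  set I : Submodule k T :=
      Submodule.span k {y : T | ∃ t ∈ S, ∃ a b : T, y = a * t * b} with hI
  -- projections onto graded pieces
  set e : (DirectSum ℕ fun i => ↥(𝒜 i)) ≃ₗ[k] T :=
    LinearEquiv.ofBijective (DirectSum.coeLinearMap 𝒜) hinternal with he
  set π : ℕ → T →ₗ[k] T := fun p =>
    (𝒜 p).subtype ∘ₗ (DirectSum.component k ℕ (fun i => 𝒜 i) p) ∘ₗ e.symm.toLinearMap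
    with hπ
  have hπ_apply : ∀ p x, π p x = ((e.symm x) p : T) := fun p x => rfl
  have hπ_mem : ∀ p x, π p x ∈ 𝒜 p := fun p x => ((e.symm x) p).2
  have hπ_same : ∀ p x, x ∈ 𝒜 p → π p x = x := by
    intro p x hx
    rw [hπ_apply, hinternal.ofBijective_coeLinearMap_of_mem hx]
  have hπ_ne : ∀ p q x, x ∈ 𝒜 q → q ≠ p → π p x = (0 : T) := by
    intro p q x hx hqp
    rw [hπ_apply, hinternal.ofBijective_coeLinearMap_of_mem_ne hqp hx]
    rfl
  -- the projections preserve J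
  have hπJ : ∀ p, ∀ x ∈ J, π p x ∈ J ⊓ 𝒜 p := by
    intro p
    have hle : J ≤ Submodule.comap (π p) (J ⊓ 𝒜 p) := by
      conv_lhs => rw [hJgraded]
      refine iSup_le fun m => fun x hx => ?_
      rw [Submodule.mem_comap]
      by_cases hmp : m = p
      · subst hmp; rw [hπ_same m x hx.2]; exact hx
      · rw [hπ_ne p m x hx.2 hmp]; exact zero_mem _
    exact fun x hx => hle hx
  -- J has no components in degrees < 2
  have hJlow : ∀ r, r < 2 → J ⊓ 𝒜 r = ⊥ := by
    intro r hr
    have hind := hinternal.submodule_iSupIndep r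
    have h1 : J ≤ ⨆ (j : ℕ) (_ : j ≠ r), 𝒜 j := by
      refine hJdeg.trans (iSup₂_le fun m hm => ?_)
      exact le_iSup₂ (f := fun (j : ℕ) (_ : j ≠ r) => 𝒜 j) m (by omega)
    have h2 : J ⊓ 𝒜 r ≤ 𝒜 r ⊓ ⨆ (j : ℕ) (_ : j ≠ r), 𝒜 j := by
      rw [inf_comm (a := J)]
      exact inf_le_inf_left _ h1
    exact le_bot_iff.mp (h2.trans_eq hind.eq_bot)
  have hSJ : S ≤ J := iSup₂_le fun m _ => inf_le_left
  have hSI : S ≤ I := fun t ht =>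
    Submodule.subset_span ⟨t, ht, 1, 1, by rw [one_mul, mul_one]⟩
  have hJpI : ∀ p, p ≤ d → ∀ x ∈ J, π p x ∈ I := by
    intro p hp x hx
    rcases lt_or_ge p 2 with h2 | h2
    · have h := hπJ p x hx
      rw [hJlow p h2] at h
      rw [Submodule.mem_bot] at h
      rw [h]; exact zero_mem _
    · refine hSI (le_iSup₂ (f := fun (m : ℕ) (_ : m ∈ Finset.Icc 2 d) => J ⊓ 𝒜 m) p
        (Finset.mem_Icc.mpr ⟨h2, hp⟩) (hπJ p x hx))
  set MI : Submodule k (T ⊗[k] T) :=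
    LinearMap.range (LinearMap.rTensor T I.subtype) ⊔
      LinearMap.range (LinearMap.lTensor T I.subtype) with hMI
  -- I is a two-sided ideal
  have hIid : ∀ (a b x : T), x ∈ I → a * x * b ∈ I := by
    intro a b x hx
    refine Submodule.span_induction ?_ ?_ ?_ ?_ hx
    · rintro y ⟨t, ht, a', b', rfl⟩
      refine Submodule.subset_span ⟨t, ht, a * a', b' * b, ?_⟩
      noncomm_ring
    · rw [mul_zero, zero_mul]; exact zero_mem _
    · intro y z _ _ hy hz
      rw [mul_add, add_mul]; exact add_mem hy hz
    · intro c y _ hy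
      rw [mul_smul_comm, smul_mul_assoc]; exact Submodule.smul_mem _ _ hy
  -- MI is a two-sided ideal of T ⊗ T
  have keyR : ∀ (w : I ⊗[k] T) (u v : T ⊗[k] T),
      u * (LinearMap.rTensor T I.subtype w) * v ∈
        LinearMap.range (LinearMap.rTensor T I.subtype) := by
    intro w
    induction w using TensorProduct.induction_on with
    | zero => intro u v; rw [map_zero, mul_zero, zero_mul]; exact zero_mem _
    | tmul i s =>
      intro u v
      induction u using TensorProduct.induction_on with
      | zero => rw [zero_mul, zero_mul]; exact zero_mem _
      | tmul u₁ u₂ =>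
        induction v using TensorProduct.induction_on with
        | zero => rw [mul_zero]; exact zero_mem _
        | tmul v₁ v₂ =>
          refine ⟨(⟨u₁ * (i : T) * v₁, hIid u₁ v₁ (i : T) i.2⟩ : I) ⊗ₜ[k] (u₂ * s * v₂), ?_⟩
          rw [LinearMap.rTensor_tmul, LinearMap.rTensor_tmul]
          simp only [Submodule.coe_subtype, Algebra.TensorProduct.tmul_mul_tmul]
        | add x y hx hy => rw [mul_add]; exact add_mem hx hy
      | add x y hx hy => rw [add_mul, add_mul]; exact add_mem hx hy
    | add x y hx hy =>
      intro u v
      rw [map_add, mul_add, add_mul]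
      exact add_mem (hx u v) (hy u v)
  have keyL : ∀ (w : T ⊗[k] I) (u v : T ⊗[k] T),
      u * (LinearMap.lTensor T I.subtype w) * v ∈
        LinearMap.range (LinearMap.lTensor T I.subtype) := by
    intro w
    induction w using TensorProduct.induction_on with
    | zero => intro u v; rw [map_zero, mul_zero, zero_mul]; exact zero_mem _
    | tmul s i =>
      intro u v
      induction u using TensorProduct.induction_on with
      | zero => rw [zero_mul, zero_mul]; exact zero_mem _
      | tmul u₁ u₂ =>
        induction v using TensorProduct.induction_on with
        | zero => rw [mul_zero]; exact zero_mem _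
        | tmul v₁ v₂ =>
          refine ⟨(u₁ * s * v₁) ⊗ₜ[k] (⟨u₂ * (i : T) * v₂, hIid u₂ v₂ (i : T) i.2⟩ : I), ?_⟩
          rw [LinearMap.lTensor_tmul, LinearMap.lTensor_tmul]
          simp only [Submodule.coe_subtype, Algebra.TensorProduct.tmul_mul_tmul]
        | add x y hx hy => rw [mul_add]; exact add_mem hx hy
      | add x y hx hy => rw [add_mul, add_mul]; exact add_mem hx hy
    | add x y hx hy =>
      intro u v
      rw [map_add, mul_add, add_mul]
      exact add_mem (hx u v) (hy u v)
  have hMIid : ∀ (u v z : T ⊗[k] T), z ∈ MI → u * z * v ∈ MI := by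
    intro u v z hz
    rcases Submodule.mem_sup.mp hz with ⟨z₁, hz₁, z₂, hz₂, rfl⟩
    rcases hz₁ with ⟨w₁, rfl⟩
    rcases hz₂ with ⟨w₂, rfl⟩
    rw [mul_add, add_mul]
    exact add_mem (Submodule.mem_sup_left (keyR w₁ u v)) (Submodule.mem_sup_right (keyL w₂ u v))
  -- the crucial graded step: comul of an element of S lands in MI
  have hScomul : ∀ t ∈ S, comul (R := k) t ∈ MI := by
    have hle : S ≤ Submodule.comap (comul (R := k) (A := T)) MI := by
      refine iSup₂_le fun m hm => fun t ht => ?_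
      obtain ⟨hm2, hmd⟩ := Finset.mem_Icc.mp hm
      rw [Submodule.mem_comap]
      set F : Finset (ℕ × ℕ) :=
        (Finset.range (m + 1) ×ˢ Finset.range (m + 1)).filter (fun p => p.1 + p.2 = m) with hF
      set P : T ⊗[k] T →ₗ[k] T ⊗[k] T :=
        ∑ p ∈ F, TensorProduct.map (π p.1) (π p.2) with hP
      have hPfix : P (comul (R := k) t) = comul (R := k) t := by
        have hle2 : (⨆ (p : ℕ × ℕ) (_ : p.1 + p.2 = m),
            LinearMap.range (TensorProduct.map (𝒜 p.1).subtype (𝒜 p.2).subtype)) ≤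
            LinearMap.eqLocus P LinearMap.id := by
          refine iSup₂_le fun p hp => ?_
          rintro z ⟨w, rfl⟩
          induction w using TensorProduct.induction_on with
          | zero => rw [map_zero]; exact zero_mem _
          | tmul a b =>
            rw [LinearMap.mem_eqLocus, LinearMap.id_apply, TensorProduct.map_tmul,
              hP, LinearMap.sum_apply]
            have hmemF : (p.1, p.2) ∈ F := by
              rw [hF, Finset.mem_filter, Finset.mem_product, Finset.mem_range,
                Finset.mem_range]
              exact ⟨⟨by omega, by omega⟩, hp⟩
            rw [Finset.sum_eq_single_of_mem (p.1, p.2) hmemF ?_]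
            · rw [TensorProduct.map_tmul, hπ_same p.1 ((𝒜 p.1).subtype a) a.2,
                hπ_same p.2 ((𝒜 p.2).subtype b) b.2]
            · intro q hq hne
              have hqsum : q.1 + q.2 = m := (Finset.mem_filter.mp hq).2
              by_cases h1 : q.1 = p.1
              · exfalso
                have : q.2 = p.2 := by omega
                exact hne (Prod.ext h1 this)
              · rw [TensorProduct.map_tmul,
                  hπ_ne q.1 p.1 ((𝒜 p.1).subtype a) a.2 (fun h => h1 h.symm),
                  TensorProduct.zero_tmul]
          | add x y hx hy => rw [map_add]; exact add_mem hx hy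
        have := hle2 (hcomul m t ht.2)
        rwa [LinearMap.mem_eqLocus, LinearMap.id_apply] at this
      rw [← hPfix, hP, LinearMap.sum_apply]
      refine Submodule.sum_mem _ fun p hpF => ?_
      have hpbnd : p.1 ≤ d ∧ p.2 ≤ d := by
        have h := Finset.mem_filter.mp hpF
        have h1 := (Finset.mem_product.mp h.1).1
        have h2 := (Finset.mem_product.mp h.1).2
        rw [Finset.mem_range] at h1 h2
        omega
      have hct := (hJcoideal t (hSJ (le_iSup₂ (f := fun (m : ℕ)
        (_ : m ∈ Finset.Icc 2 d) => J ⊓ 𝒜 m) m hm ht))).2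
      rcases Submodule.mem_sup.mp hct with ⟨z₁, ⟨w₁, rfl⟩, z₂, ⟨w₂, rfl⟩, heq⟩
      rw [← heq, map_add]
      refine add_mem (Submodule.mem_sup_left ?_) (Submodule.mem_sup_right ?_)
      · have hcomp : (TensorProduct.map (π p.1) (π p.2))
            ((LinearMap.rTensor T J.subtype) w₁) =
            (TensorProduct.map ((π p.1) ∘ₗ J.subtype) ((π p.2) ∘ₗ LinearMap.id)) w₁ := by
          rw [TensorProduct.map_comp (π p.1) (π p.2) J.subtype LinearMap.id]; rfl
        rw [hcomp]
        refine datic_aux_rT I ((π p.1) ∘ₗ J.subtype) ((π p.2) ∘ₗ LinearMap.id) ?_ ⟨w₁, rfl⟩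
        rintro _ ⟨⟨x, hx⟩, rfl⟩
        exact hJpI p.1 hpbnd.1 x hx
      · have hcomp : (TensorProduct.map (π p.1) (π p.2))
            ((LinearMap.lTensor T J.subtype) w₂) =
            (TensorProduct.map ((π p.1) ∘ₗ LinearMap.id) ((π p.2) ∘ₗ J.subtype)) w₂ := by
          rw [TensorProduct.map_comp (π p.1) (π p.2) LinearMap.id J.subtype]; rfl
        rw [hcomp]
        refine datic_aux_lT I ((π p.1) ∘ₗ LinearMap.id) ((π p.2) ∘ₗ J.subtype) ?_ ⟨w₂, rfl⟩
        rintro _ ⟨⟨x, hx⟩, rfl⟩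
        exact hJpI p.2 hpbnd.2 x hx
    exact fun t ht => hle ht
  -- conclude for the whole ideal I
  have hQ : I ≤ LinearMap.ker (counit (R := k) (A := T)) ⊓
      Submodule.comap (comul (R := k) (A := T)) MI := by
    rw [hI]
    refine Submodule.span_le.mpr ?_
    rintro y ⟨t, ht, a, b, rfl⟩
    refine Submodule.mem_inf.mpr ⟨?_, ?_⟩
    · rw [LinearMap.mem_ker, Bialgebra.counit_mul, Bialgebra.counit_mul,
        (hJcoideal t (hSJ ht)).1, mul_zero, zero_mul]
    · rw [Submodule.mem_comap, Bialgebra.comul_mul, Bialgebra.comul_mul]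
      exact hMIid _ _ _ (hScomul t ht)
  intro x hx
  have h := Submodule.mem_inf.mp (hQ hx)
  exact ⟨LinearMap.mem_ker.mp h.1, h.2⟩
end
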